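/- arXiv:1503.05721 — 2 statements merged into one kernel-verified Lean document; each statement's English description precedes it below -/
import Mathlib

section
/- Let W be a finite real reflection group with reflection arrangement A(W), and fix any linear order on A(W). Then the map sending an nbc-tuple (H_{r_1}, ..., H_{r_k}) (where H_r is the hyperplane fixed by the reflection r, and the tuple is increasing in the order) to the product w = r_1 ··· r_k ∈ W is a bijection from the set of all nbc-tuples (over all sizes k) onto W. -/
open Module

variable {V : Type} [NormedAddCommGroup V] [InnerProductSpace ℝ V] [FiniteDimensional ℝ V]

noncomputable instance : DecidableEq (Submodule ℝ V) := Classical.decEq _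

/-- The fixed subspace of a linear isometry. -/
noncomputable def fixedSub (g : V ≃ₗᵢ[ℝ] V) : Submodule ℝ V :=
  LinearMap.ker (g.toLinearEquiv.toLinearMap - LinearMap.id)

/-- `g` is a reflection: an involution different from the identity whose fixed
subspace is a hyperplane. -/
def IsReflection (g : V ≃ₗᵢ[ℝ] V) : Prop :=
  g ≠ 1 ∧ g * g = 1 ∧ finrank ℝ (fixedSub g) = finrank ℝ V - 1

/-- rank (= codimension of the intersection) of a finite set of subspaces. -/
noncomputable def arrRankV (S : Finset (Submodule ℝ V)) : ℕ :=
  finrank ℝ V - finrank ℝ (S.inf id : Submodule ℝ V)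

def ArrIndepV (S : Finset (Submodule ℝ V)) : Prop := arrRankV S = S.card

def IsCircuitV (S : Finset (Submodule ℝ V)) : Prop :=
  ¬ ArrIndepV S ∧ ∀ H ∈ S, ArrIndepV (S.erase H)

def IsBrokenCircuitV (A : Set (Submodule ℝ V)) (ord : Submodule ℝ V → ℕ)
    (B : Finset (Submodule ℝ V)) : Prop :=
  ∃ H ∈ A, H ∉ B ∧ IsCircuitV (insert H B) ∧ ∀ H' ∈ B, ord H < ord H'

/-- nbc-set: a subset of the arrangement, independent, containing no broken
circuit. -/
def IsNBCV (A : Set (Submodule ℝ V)) (ord : Submodule ℝ V → ℕ)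
    (S : Finset (Submodule ℝ V)) : Prop :=
  ↑S ⊆ A ∧ ArrIndepV S ∧ ∀ B ⊆ S, ¬ IsBrokenCircuitV A ord B

open RealInnerProductSpace
set_option linter.unusedSectionVars false
set_option linter.unusedVariables false
set_option maxHeartbeats 1000000

lemma mem_fixedSub {g : V ≃ₗᵢ[ℝ] V} {x : V} : x ∈ fixedSub g ↔ g x = x := by
  simp [fixedSub, LinearMap.mem_ker, sub_eq_zero]

lemma fixedSub_one : fixedSub (1 : V ≃ₗᵢ[ℝ] V) = ⊤ := by
  ext x; simp [mem_fixedSub]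

noncomputable def sHyp (α : V) : V ≃ₗᵢ[ℝ] V := Submodule.reflection ((ℝ ∙ α)ᗮ)

lemma sHyp_apply {α : V} (hα : ‖α‖ = 1) (v : V) :
    sHyp α v = v - (2 * ⟪v, α⟫) • α := by
  have h1 : (((ℝ ∙ α)ᗮ).starProjection v : V) = v - ⟪v, α⟫ • α := by
    rw [Submodule.starProjection_orthogonal_val, Submodule.starProjection_singleton]
    rw [hα, real_inner_comm]; norm_num
  rw [sHyp, Submodule.reflection_apply, h1]
  module

lemma sHyp_span_eq {α β : V} (h : (ℝ ∙ α) = ℝ ∙ β) : sHyp α = sHyp β := by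
  unfold sHyp
  congr 1
  rw [h]

lemma sHyp_mul_self {α : V} : sHyp α * sHyp α = 1 := by
  ext v
  exact Submodule.reflection_involutive _ v

lemma sHyp_inv {α : V} : (sHyp α)⁻¹ = sHyp α :=
  inv_eq_of_mul_eq_one_left sHyp_mul_self

lemma mem_orthSingleton {α x : V} : x ∈ (ℝ ∙ α)ᗮ ↔ ⟪x, α⟫ = 0 := by
  rw [Submodule.mem_orthogonal]
  constructor
  · intro h; rw [real_inner_comm]; exact h α (Submodule.mem_span_singleton_self α)
  · intro h u hu
    obtain ⟨c, rfl⟩ := Submodule.mem_span_singleton.mp hu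
    rw [real_inner_smul_left, real_inner_comm, h, mul_zero]

lemma fixedSub_sHyp {α : V} (hα : ‖α‖ = 1) : fixedSub (sHyp α) = (ℝ ∙ α)ᗮ := by
  have hαn : α ≠ 0 := by intro h; rw [h, norm_zero] at hα; norm_num at hα
  ext x
  rw [mem_fixedSub, sHyp_apply hα, mem_orthSingleton, sub_eq_self, smul_eq_zero]
  constructor
  · rintro (h | h)
    · linarith
    · exact absurd h hαn
  · intro h; left; rw [h, mul_zero]

lemma finrank_orthSingleton {α : V} (hα : α ≠ 0) :
    finrank ℝ ((ℝ ∙ α)ᗮ : Submodule ℝ V) = finrank ℝ V - 1 := by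
  have h1 : finrank ℝ (ℝ ∙ α : Submodule ℝ V) = 1 := finrank_span_singleton hα
  have h2 := Submodule.finrank_add_finrank_orthogonal (ℝ ∙ α : Submodule ℝ V)
  omega

lemma isReflection_sHyp {α : V} (hα : ‖α‖ = 1) : IsReflection (sHyp α) := by
  have hαn : α ≠ 0 := by intro h; rw [h, norm_zero] at hα; norm_num at hα
  refine ⟨?_, sHyp_mul_self, ?_⟩
  · intro h
    have : sHyp α α = α := by rw [h]; rfl
    rw [sHyp_apply hα, real_inner_self_eq_norm_sq, hα] at this
    simp only [one_pow, mul_one, sub_eq_self] at this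
    rw [smul_eq_zero] at this
    rcases this with h' | h'
    · norm_num at h'
    · exact hαn h'
  · rw [fixedSub_sHyp hα]; exact finrank_orthSingleton hαn

lemma span_singleton_neg (α : V) : (ℝ ∙ (-α)) = ℝ ∙ α := by
  ext x
  simp only [Submodule.mem_span_singleton]
  constructor
  · rintro ⟨c, rfl⟩; exact ⟨-c, by simp⟩
  · rintro ⟨c, rfl⟩; exact ⟨-c, by simp⟩

lemma IsReflection.nontrivial {g : V ≃ₗᵢ[ℝ] V} (hg : IsReflection g) : Nontrivial V := by
  by_contra h
  rw [not_nontrivial_iff_subsingleton] at h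
  exact hg.1 (by ext x; exact Subsingleton.elim _ _)

/-- Structure theorem for reflections. -/
lemma IsReflection.exists_root {g : V ≃ₗᵢ[ℝ] V} (hg : IsReflection g) :
    ∃ α : V, ‖α‖ = 1 ∧ fixedSub g = (ℝ ∙ α)ᗮ ∧ g = sHyp α := by
  haveI := hg.nontrivial
  have hn : 0 < finrank ℝ V := finrank_pos
  set K := fixedSub g with hK
  have hdim : finrank ℝ (Kᗮ : Submodule ℝ V) = 1 := by
    have h2 := Submodule.finrank_add_finrank_orthogonal K
    have h3 : finrank ℝ K = finrank ℝ V - 1 := hg.2.2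
    omega
  obtain ⟨v, hv0, hv⟩ := (finrank_eq_one_iff' (K := ℝ) (V := ↥Kᗮ)).mp hdim
  have hvV : (v : V) ≠ 0 := fun h => hv0 (Subtype.ext h)
  set α : V := ‖(v:V)‖⁻¹ • (v : V) with hα_def
  have hαnorm : ‖α‖ = 1 := by
    rw [hα_def, norm_smul, norm_inv, norm_norm, inv_mul_cancel₀ (norm_ne_zero_iff.mpr hvV)]
  have hαmem : α ∈ Kᗮ := Submodule.smul_mem _ _ v.2
  have hαn0 : α ≠ 0 := by intro h; rw [h, norm_zero] at hαnorm; norm_num at hαnorm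
  have hKorth : Kᗮ = ℝ ∙ α := by
    apply le_antisymm
    · intro w hw
      obtain ⟨c, hc⟩ := hv ⟨w, hw⟩
      have : c • (v : V) = w := congrArg Subtype.val hc
      rw [Submodule.mem_span_singleton]
      exact ⟨c * ‖(v:V)‖, by rw [hα_def, smul_smul, mul_assoc,
        mul_inv_cancel₀ (norm_ne_zero_iff.mpr hvV), mul_one, this]⟩
    · rw [Submodule.span_singleton_le_iff_mem]; exact hαmem
  have hKeq : K = (ℝ ∙ α)ᗮ := by rw [← hKorth, Submodule.orthogonal_orthogonal]
  refine ⟨α, hαnorm, hKeq, ?_⟩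
  -- g α = -α
  have hgα_mem : g α ∈ Kᗮ := by
    rw [Submodule.mem_orthogonal]
    intro u hu
    have : g u = u := mem_fixedSub.mp hu
    calc ⟪u, g α⟫ = ⟪g u, g α⟫ := by rw [this]
    _ = ⟪u, α⟫ := g.inner_map_map u α
    _ = 0 := by
        have := (Submodule.mem_orthogonal _ _).mp hαmem u hu
        exact this
  have hgα : g α = -α := by
    rw [hKorth, Submodule.mem_span_singleton] at hgα_mem
    obtain ⟨c, hc⟩ := hgα_mem
    have hnorm : ‖c • α‖ = ‖α‖ := by rw [hc]; exact g.norm_map α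
    rw [norm_smul, hαnorm, mul_one] at hnorm
    have hc1 : c = 1 ∨ c = -1 := by
      rcases abs_eq (by norm_num : (0:ℝ) ≤ 1) |>.mp (by rw [← Real.norm_eq_abs]; exact hnorm) with h | h
      · left; exact h
      · right; exact h
    rcases hc1 with rfl | rfl
    · exfalso
      rw [one_smul] at hc
      have hαK : α ∈ K := mem_fixedSub.mpr hc.symm
      have : ⟪α, α⟫ = 0 := (Submodule.mem_orthogonal _ _).mp hαmem α hαK
      rw [real_inner_self_eq_norm_sq, hαnorm] at this
      norm_num at this
    · rw [← hc]; module
  -- decompose and conclude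
  ext x
  rw [sHyp_apply hαnorm]
  have hsup : K ⊔ Kᗮ = ⊤ := Submodule.sup_orthogonal_of_hasOrthogonalProjection
  have hx : x ∈ K ⊔ Kᗮ := by rw [hsup]; trivial
  obtain ⟨k, hk, w, hw, rfl⟩ := Submodule.mem_sup.mp hx
  obtain ⟨t, rfl⟩ := Submodule.mem_span_singleton.mp (by rw [← hKorth]; exact hw)
  have hkα : ⟪k, α⟫ = 0 := (Submodule.mem_orthogonal _ _).mp hαmem k hk
  have hinner : ⟪k + t • α, α⟫ = t := by
    rw [inner_add_left, real_inner_smul_left, hkα, real_inner_self_eq_norm_sq, hαnorm]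
    norm_num
  rw [hinner, map_add, mem_fixedSub.mp hk, LinearIsometryEquiv.map_smul, hgα]
  module

lemma IsReflection.inv_eq {g : V ≃ₗᵢ[ℝ] V} (hg : IsReflection g) : g⁻¹ = g :=
  inv_eq_of_mul_eq_one_left hg.2.1

lemma IsReflection.eq_of_fixedSub_eq {g h : V ≃ₗᵢ[ℝ] V} (hg : IsReflection g)
    (hh : IsReflection h) (he : fixedSub g = fixedSub h) : g = h := by
  obtain ⟨α, hα, hKα, rfl⟩ := hg.exists_root
  obtain ⟨β, hβ, hKβ, rfl⟩ := hh.exists_root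
  apply sHyp_span_eq
  have : ((ℝ ∙ α)ᗮ : Submodule ℝ V) = (ℝ ∙ β)ᗮ := by rw [← hKα, ← hKβ, he]
  calc (ℝ ∙ α) = (ℝ ∙ α)ᗮᗮ := (Submodule.orthogonal_orthogonal _).symm
    _ = (ℝ ∙ β)ᗮᗮ := by rw [this]
    _ = ℝ ∙ β := Submodule.orthogonal_orthogonal _

lemma sHyp_conj (w : V ≃ₗᵢ[ℝ] V) {α : V} (hα : ‖α‖ = 1) :
    w * sHyp α * w⁻¹ = sHyp (w α) := by
  have hwα : ‖w α‖ = 1 := by rw [w.norm_map]; exact hα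
  ext v
  have h1 : (w * sHyp α * w⁻¹) v = w (sHyp α (w⁻¹ v)) := rfl
  have hws : w (w⁻¹ v) = v := w.apply_symm_apply v
  rw [h1, sHyp_apply hα, sHyp_apply hwα, map_sub, LinearIsometryEquiv.map_smul, hws]
  have : ⟪w⁻¹ v, α⟫ = ⟪v, w α⟫ := by
    calc ⟪w⁻¹ v, α⟫ = ⟪w (w⁻¹ v), w α⟫ := (w.inner_map_map _ _).symm
      _ = ⟪v, w α⟫ := by rw [hws]
  rw [this]

/-- The range of `w - 1` is the orthogonal complement of the fixed space. -/
lemma range_sub_id (w : V ≃ₗᵢ[ℝ] V) :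
    LinearMap.range (w.toLinearEquiv.toLinearMap - LinearMap.id) = (fixedSub w)ᗮ := by
  have hle : LinearMap.range (w.toLinearEquiv.toLinearMap - LinearMap.id) ≤ (fixedSub w)ᗮ := by
    rintro x ⟨y, rfl⟩
    rw [Submodule.mem_orthogonal]
    intro u hu
    have hu' : w u = u := mem_fixedSub.mp hu
    simp only [LinearMap.sub_apply, LinearMap.id_apply, LinearEquiv.coe_coe,
      LinearIsometryEquiv.coe_toLinearEquiv]
    rw [inner_sub_right]
    calc ⟪u, w y⟫ - ⟪u, y⟫ = ⟪w u, w y⟫ - ⟪u, y⟫ := by rw [hu']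
      _ = 0 := by rw [w.inner_map_map]; ring
  apply Submodule.eq_of_le_of_finrank_le hle
  have h1 := LinearMap.finrank_range_add_finrank_ker (w.toLinearEquiv.toLinearMap - LinearMap.id)
  have h2 : LinearMap.ker (w.toLinearEquiv.toLinearMap - LinearMap.id) = fixedSub w := rfl
  have h3 := Submodule.finrank_add_finrank_orthogonal (fixedSub w)
  rw [h2] at h1
  omega

lemma orth_mem_of_le {K : Submodule ℝ V} {α : V} (h : K ≤ (ℝ ∙ α)ᗮ) : α ∈ Kᗮ := by
  have h2 : ((ℝ ∙ α)ᗮ)ᗮ ≤ Kᗮ := Submodule.orthogonal_le h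
  exact h2 (Submodule.le_orthogonal_orthogonal _ (Submodule.mem_span_singleton_self α))

/-- Multiplying by a reflection whose hyperplane contains the fixed space
increases the fixed space dimension by one.  (descent) -/
lemma fixedSub_mul_of_le {w : V ≃ₗᵢ[ℝ] V} {α : V} (hα : ‖α‖ = 1)
    (hle : fixedSub w ≤ (ℝ ∙ α)ᗮ) :
    finrank ℝ (fixedSub (sHyp α * w)) = finrank ℝ (fixedSub w) + 1 := by
  have hαn : α ≠ 0 := by intro h; rw [h, norm_zero] at hα; norm_num at hα
  -- the magic fixed vector
  have hαmem : α ∈ (fixedSub w)ᗮ := orth_mem_of_le hle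
  rw [← range_sub_id] at hαmem
  obtain ⟨y, hy⟩ := hαmem
  have hy' : w y - y = α := hy
  have hyα : ⟪y, α⟫ = -(1/2) := by
    have hnorm : ⟪w y - y, w y - y⟫ = 1 := by
      rw [real_inner_self_eq_norm_sq, hy', hα]; norm_num
    have hiso : ⟪w y, w y⟫ = ⟪y, y⟫ := w.inner_map_map y y
    have hyy : ⟪w y, y⟫ = ⟪y, w y⟫ := real_inner_comm _ _
    rw [inner_sub_left, inner_sub_right, inner_sub_right, hiso] at hnorm
    have : ⟪y, α⟫ = ⟪y, w y⟫ - ⟪y, y⟫ := by rw [← hy', inner_sub_right]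
    rw [this]; linarith
  have hymem : y ∈ fixedSub (sHyp α * w) := by
    rw [mem_fixedSub]
    have h1 : (sHyp α * w) y = sHyp α (w y) := rfl
    have h2 : w y = y + α := by rw [← hy']; abel
    rw [h1, h2, sHyp_apply hα, inner_add_left, hyα, real_inner_self_eq_norm_sq, hα]
    norm_num
  have hynot : y ∉ fixedSub w := by
    rw [mem_fixedSub]
    intro h
    rw [h] at hy'
    simp at hy'
    exact hαn hy'.symm
  -- lower bound
  have hsub : fixedSub w ≤ fixedSub (sHyp α * w) := by
    intro x hx
    have hx1 : w x = x := mem_fixedSub.mp hx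
    have hx2 : sHyp α x = x := by
      rw [← fixedSub_sHyp hα] at hle
      exact mem_fixedSub.mp (hle hx)
    rw [mem_fixedSub]
    show sHyp α (w x) = x
    rw [hx1, hx2]
  have hlt : fixedSub w < fixedSub (sHyp α * w) := lt_of_le_of_ne hsub
    (fun h => hynot (h ▸ hymem))
  have hlow := Submodule.finrank_lt_finrank_of_lt hlt
  -- upper bound
  have hup : fixedSub (sHyp α * w) ⊓ (ℝ ∙ α)ᗮ ≤ fixedSub w := by
    intro x ⟨hx1, hx2⟩
    have hfix : sHyp α x = x := by rw [← fixedSub_sHyp hα] at hx2; exact mem_fixedSub.mp hx2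
    have h1 : sHyp α (w x) = x := mem_fixedSub.mp hx1
    have h2 : sHyp α (sHyp α (w x)) = sHyp α x := by rw [h1]
    have h3 : ∀ v, sHyp α (sHyp α v) = v := fun v => congrArg (fun f : V ≃ₗᵢ[ℝ] V => f v) sHyp_mul_self
    rw [h3, hfix] at h2
    exact mem_fixedSub.mpr h2
  have hH : finrank ℝ ((ℝ ∙ α)ᗮ : Submodule ℝ V) = finrank ℝ V - 1 := finrank_orthSingleton hαn
  have hVpos : 0 < finrank ℝ V := by
    have : 0 < finrank ℝ (ℝ ∙ α : Submodule ℝ V) := by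
      rw [finrank_span_singleton hαn]; norm_num
    have h2 := Submodule.finrank_le (ℝ ∙ α : Submodule ℝ V)
    omega
  have hR1 : finrank ℝ (fixedSub (sHyp α * w)) ≤
      finrank ℝ ((fixedSub (sHyp α * w)) ⊓ (ℝ ∙ α)ᗮ : Submodule ℝ V) + 1 := by
    have h4 := Submodule.finrank_sup_add_finrank_inf_eq (fixedSub (sHyp α * w)) ((ℝ ∙ α)ᗮ)
    have h5 := Submodule.finrank_le ((fixedSub (sHyp α * w)) ⊔ (ℝ ∙ α)ᗮ : Submodule ℝ V)
    omega
  have hmono := Submodule.finrank_mono hup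
  omega

lemma inf_fixedSub_le_mul (g w : V ≃ₗᵢ[ℝ] V) :
    fixedSub g ⊓ fixedSub w ≤ fixedSub (g * w) := by
  intro x hx
  have h1 : g x = x := mem_fixedSub.mp (Submodule.mem_inf.mp hx).1
  have h2 : w x = x := mem_fixedSub.mp (Submodule.mem_inf.mp hx).2
  refine mem_fixedSub.mpr ?_
  show g (w x) = x
  rw [h2, h1]

/-- ascent case: multiplying by a reflection whose hyperplane does not contain
the fixed space intersects the fixed space.  -/
lemma fixedSub_mul_of_not_le {w : V ≃ₗᵢ[ℝ] V} {α : V} (hα : ‖α‖ = 1)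
    (hnle : ¬ fixedSub w ≤ (ℝ ∙ α)ᗮ) :
    fixedSub (sHyp α * w) = (ℝ ∙ α)ᗮ ⊓ fixedSub w := by
  have hαn : α ≠ 0 := by intro h; rw [h, norm_zero] at hα; norm_num at hα
  apply le_antisymm
  · intro x hx
    have h1 : sHyp α (w x) = x := mem_fixedSub.mp hx
    have h3 : ∀ v, sHyp α (sHyp α v) = v := fun v =>
      congrArg (fun f : V ≃ₗᵢ[ℝ] V => f v) sHyp_mul_self
    have h2 : w x = sHyp α x := by
      have h5 := congrArg (fun v => sHyp α v) h1
      simp only [h3] at h5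
      exact h5
    have h4 : w x - x = -(2 * ⟪x, α⟫) • α := by
      rw [h2, sHyp_apply hα]; module
    have hxα : ⟪x, α⟫ = 0 := by
      by_contra hne
      have hmem : w x - x ∈ LinearMap.range (w.toLinearEquiv.toLinearMap - LinearMap.id) := by
        refine ⟨x, ?_⟩
        simp only [LinearMap.sub_apply, LinearMap.id_apply, LinearEquiv.coe_coe,
          LinearIsometryEquiv.coe_toLinearEquiv]
      rw [range_sub_id, h4] at hmem
      have hc : -(2 * ⟪x, α⟫) ≠ 0 := by
        intro h
        exact hne ((mul_eq_zero.mp (neg_eq_zero.mp h)).resolve_left (by norm_num))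
      have hαm : α ∈ (fixedSub w)ᗮ := by
        have := Submodule.smul_mem (fixedSub w)ᗮ (-(2 * ⟪x, α⟫))⁻¹ hmem
        rw [smul_smul, inv_mul_cancel₀ hc, one_smul] at this
        exact this
      apply hnle
      intro u hu
      rw [mem_orthSingleton]
      exact (Submodule.mem_orthogonal _ _).mp hαm u hu
    have hwx : w x = x := by
      rw [h2, sHyp_apply hα, hxα, mul_zero, zero_smul, sub_zero]
    exact Submodule.mem_inf.mpr ⟨mem_orthSingleton.mpr hxα, mem_fixedSub.mpr hwx⟩
  · rw [← fixedSub_sHyp hα]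
    exact inf_fixedSub_le_mul _ _

section RankLemmas

def Hyper (H : Submodule ℝ V) : Prop := finrank ℝ H = finrank ℝ V - 1 ∧ 0 < finrank ℝ V

lemma finrank_inf_hyper {K H : Submodule ℝ V} (hH : Hyper H) :
    finrank ℝ K ≤ finrank ℝ (H ⊓ K : Submodule ℝ V) + 1 ∧
    finrank ℝ (H ⊓ K : Submodule ℝ V) ≤ finrank ℝ K := by
  have h1 := Submodule.finrank_sup_add_finrank_inf_eq K H
  have h2 := Submodule.finrank_le (K ⊔ H : Submodule ℝ V)
  have h3 := Submodule.finrank_mono (inf_le_left : K ⊓ H ≤ K)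
  have h5 : (H ⊓ K : Submodule ℝ V) = K ⊓ H := inf_comm H K
  obtain ⟨hHd, hV⟩ := hH
  rw [h5]
  omega

lemma arrRank_insert_le {S : Finset (Submodule ℝ V)} {H : Submodule ℝ V} (hH : Hyper H) :
    arrRankV (insert H S) ≤ arrRankV S + 1 ∧ arrRankV S ≤ arrRankV (insert H S) := by
  have hinf : (insert H S).inf id = H ⊓ S.inf id := Finset.inf_insert
  have h2 := finrank_inf_hyper (K := S.inf id) hH
  have e1 : arrRankV (insert H S) = finrank ℝ V - finrank ℝ (H ⊓ S.inf id : Submodule ℝ V) := by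
    rw [arrRankV, hinf]
  rw [e1, arrRankV]
  have h4 := Submodule.finrank_le (S.inf id : Submodule ℝ V)
  omega

lemma arrRank_le_card {S : Finset (Submodule ℝ V)} (hS : ∀ H ∈ S, Hyper H) :
    arrRankV S ≤ S.card := by
  induction S using Finset.induction_on with
  | empty => show finrank ℝ V - finrank ℝ (⊤ : Submodule ℝ V) ≤ (∅ : Finset (Submodule ℝ V)).card; simp
  | @insert a s ha ih =>
    have h2 := (arrRank_insert_le (S := s) (hS a (Finset.mem_insert_self a s))).1
    have h3 := ih (fun H hH => hS H (Finset.mem_insert_of_mem hH))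
    rw [Finset.card_insert_of_notMem ha]
    omega

lemma arrRank_union_le {T U : Finset (Submodule ℝ V)} (hU : ∀ H ∈ U, Hyper H) :
    arrRankV (T ∪ U) ≤ arrRankV T + U.card := by
  induction U using Finset.induction_on with
  | empty => simp
  | @insert a s ha ih =>
    have h0 : T ∪ insert a s = insert a (T ∪ s) := Finset.union_insert _ _ _
    have h2 := (arrRank_insert_le (S := T ∪ s) (hU a (Finset.mem_insert_self a s))).1
    have h3 := ih (fun H hH => hU H (Finset.mem_insert_of_mem hH))
    rw [Finset.card_insert_of_notMem ha, h0]
    omega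

lemma indep_subset {S T : Finset (Submodule ℝ V)} (hS : ∀ H ∈ S, Hyper H)
    (hTS : T ⊆ S) (hind : ArrIndepV S) : ArrIndepV T := by
  have h1 : T ∪ (S \ T) = S := Finset.union_sdiff_of_subset hTS
  have h2 : arrRankV S ≤ arrRankV T + (S \ T).card := by
    conv_lhs => rw [← h1]
    exact arrRank_union_le (fun H hH => hS H (Finset.mem_sdiff.mp hH).1)
  have h3 : arrRankV T ≤ T.card := arrRank_le_card (fun H hH => hS H (hTS hH))
  have h4 : T.card + (S \ T).card = S.card := by
    rw [Finset.card_sdiff_of_subset hTS]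
    have := Finset.card_le_card hTS
    omega
  have h5 : arrRankV S = S.card := hind
  show arrRankV T = T.card
  omega

lemma indep_insert_iff {S : Finset (Submodule ℝ V)} {H : Submodule ℝ V}
    (hS : ∀ K ∈ S, Hyper K) (hH : Hyper H) (hHS : H ∉ S) (hind : ArrIndepV S) :
    ArrIndepV (insert H S) ↔ ¬ (S.inf id ≤ H) := by
  have hcard : (insert H S).card = S.card + 1 := Finset.card_insert_of_notMem hHS
  have hinf : (insert H S).inf id = H ⊓ S.inf id := Finset.inf_insert
  have e1 : arrRankV (insert H S) = finrank ℝ V - finrank ℝ (H ⊓ S.inf id : Submodule ℝ V) := by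
    rw [arrRankV, hinf]
  have hrle := Submodule.finrank_le (S.inf id : Submodule ℝ V)
  have h5 : arrRankV S = S.card := hind
  have h6 : arrRankV S = finrank ℝ V - finrank ℝ (S.inf id : Submodule ℝ V) := rfl
  constructor
  · intro hi hle
    have h7 : H ⊓ S.inf id = S.inf id := inf_eq_right.mpr hle
    have h8 : arrRankV (insert H S) = (insert H S).card := hi
    rw [e1, h7, hcard] at h8
    omega
  · intro hnle
    have hlt : H ⊓ S.inf id < S.inf id := lt_of_le_of_ne inf_le_right
      (fun h => hnle (by rw [← h]; exact inf_le_left))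
    have h2 := Submodule.finrank_lt_finrank_of_lt hlt
    have h4 : arrRankV (insert H S) ≤ (insert H S).card := arrRank_le_card (fun K hK => by
      rcases Finset.mem_insert.mp hK with h | h
      · rw [h]; exact hH
      · exact hS K h)
    show arrRankV (insert H S) = (insert H S).card
    rw [e1, hcard] at *
    omega

lemma dep_insert_inf_le {S : Finset (Submodule ℝ V)} {H : Submodule ℝ V}
    (hS : ∀ K ∈ S, Hyper K) (hH : Hyper H) (hHS : H ∉ S) (hind : ArrIndepV S)
    (hdep : ¬ ArrIndepV (insert H S)) : S.inf id ≤ H := by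
  by_contra hnle
  exact hdep ((indep_insert_iff hS hH hHS hind).mpr hnle)

end RankLemmas

lemma exists_circuit {T : Finset (Submodule ℝ V)} {H0 : Submodule ℝ V}
    (hT : ∀ K ∈ T, Hyper K) (hH0 : Hyper H0) (hH0T : H0 ∉ T) (hind : ArrIndepV T)
    (hle : T.inf id ≤ H0) :
    ∃ C ⊆ T, IsCircuitV (insert H0 C) := by
  classical
  obtain ⟨C, hCmem, hCmin⟩ := Finset.exists_min_image
    (T.powerset.filter (fun C => C.inf id ≤ H0)) Finset.card
    ⟨T, Finset.mem_filter.mpr ⟨Finset.mem_powerset_self T, hle⟩⟩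
  rw [Finset.mem_filter, Finset.mem_powerset] at hCmem
  obtain ⟨hCT, hCle⟩ := hCmem
  have hChyp : ∀ K ∈ C, Hyper K := fun K hK => hT K (hCT hK)
  have hH0C : H0 ∉ C := fun h => hH0T (hCT h)
  have hCind : ArrIndepV C := indep_subset hT hCT hind
  refine ⟨C, hCT, ?_, ?_⟩
  · intro hi
    exact (indep_insert_iff hChyp hH0 hH0C hCind).mp hi hCle
  · intro K hK
    rcases Finset.mem_insert.mp hK with rfl | hKC
    · rw [Finset.erase_insert hH0C]
      exact hCind
    · have hKne : K ≠ H0 := fun h => hH0C (h ▸ hKC)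
      have herase : (insert H0 C).erase K = insert H0 (C.erase K) :=
        Finset.erase_insert_of_ne hKne.symm
      rw [herase]
      set D := C.erase K with hD
      have hDT : D ⊆ T := fun x hx => hCT (Finset.erase_subset _ _ hx)
      have hDind : ArrIndepV D := indep_subset hT hDT hind
      have hDhyp : ∀ K' ∈ D, Hyper K' := fun K' hK' => hT K' (hDT hK')
      have hH0D : H0 ∉ D := fun h => hH0T (hDT h)
      refine (indep_insert_iff hDhyp hH0 hH0D hDind).mpr ?_
      intro hDle
      have hmem : D ∈ T.powerset.filter (fun C => C.inf id ≤ H0) :=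
        Finset.mem_filter.mpr ⟨Finset.mem_powerset.mpr hDT, hDle⟩
      have := hCmin D hmem
      have hcard : D.card < C.card := Finset.card_erase_lt_of_mem hKC
      omega

/-- A submodule is not covered by finitely many submodules unless contained in one. -/
lemma exists_avoid (K : Submodule ℝ V) (T : Finset (Submodule ℝ V))
    (h : ∀ L ∈ T, ¬ K ≤ L) : ∃ x ∈ K, ∀ L ∈ T, x ∉ L := by
  classical
  induction T using Finset.induction_on with
  | empty => exact ⟨0, K.zero_mem, fun L hL => absurd hL (Finset.notMem_empty L)⟩
  | @insert L0 T hL0T ih =>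
    obtain ⟨x, hxK, hx⟩ := ih (fun L hL => h L (Finset.mem_insert_of_mem hL))
    by_cases hxL0 : x ∉ L0
    · exact ⟨x, hxK, fun L hL => by
        rcases Finset.mem_insert.mp hL with rfl | hL'
        · exact hxL0
        · exact hx L hL'⟩
    push_neg at hxL0
    obtain ⟨y, hyK, hyL0⟩ := SetLike.not_le_iff_exists.mp (h L0 (Finset.mem_insert_self L0 T))
    set B : Set ℝ := ⋃ L ∈ (insert L0 T : Finset (Submodule ℝ V)), {t : ℝ | x + t • y ∈ L}
      with hB
    have hBfin : B.Finite := by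
      refine Set.Finite.biUnion (Finset.finite_toSet _) ?_
      intro L hL
      simp only [Finset.mem_coe, Finset.mem_insert] at hL
      rcases hL with rfl | hL'
      · apply Set.Subsingleton.finite
        intro t1 ht1 t2 ht2
        by_contra hne
        have h1 : t1 • y ∈ L := (L.add_mem_iff_right hxL0).mp ht1
        have h2 : t2 • y ∈ L := (L.add_mem_iff_right hxL0).mp ht2
        have h3 : (t1 - t2) • y ∈ L := by rw [sub_smul]; exact L.sub_mem h1 h2
        have h4 : y ∈ L := by
          have := L.smul_mem (t1 - t2)⁻¹ h3
          rwa [smul_smul, inv_mul_cancel₀ (sub_ne_zero.mpr hne), one_smul] at this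
        exact hyL0 h4
      · apply Set.Subsingleton.finite
        intro t1 ht1 t2 ht2
        by_contra hne
        have h3 : (t1 - t2) • y ∈ L := by
          rw [sub_smul]
          have : (x + t1 • y) - (x + t2 • y) = t1 • y - t2 • y := by abel
          rw [← this]
          exact L.sub_mem ht1 ht2
        have h4 : y ∈ L := by
          have := L.smul_mem (t1 - t2)⁻¹ h3
          rwa [smul_smul, inv_mul_cancel₀ (sub_ne_zero.mpr hne), one_smul] at this
        have h5 : x ∈ L := by
          have := L.sub_mem ht1 (L.smul_mem t1 h4)
          simpa using this
        exact hx L hL' h5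
    obtain ⟨t, ht⟩ := hBfin.infinite_compl.nonempty
    refine ⟨x + t • y, K.add_mem hxK (K.smul_mem t hyK), ?_⟩
    intro L hL hmem
    apply ht
    rw [hB]
    exact Set.mem_biUnion hL hmem

noncomputable instance : DecidableEq V := Classical.decEq _

section RootSystem

def Phi (W : Subgroup (V ≃ₗᵢ[ℝ] V)) : Set V := {α | ‖α‖ = 1 ∧ sHyp α ∈ W}

variable {W : Subgroup (V ≃ₗᵢ[ℝ] V)}

lemma phi_norm {α : V} (h : α ∈ Phi W) : ‖α‖ = 1 := h.1

lemma phi_refl_mem {α : V} (h : α ∈ Phi W) : sHyp α ∈ W := h.2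

lemma phi_stable' {w : V ≃ₗᵢ[ℝ] V} {α : V} (hw : w ∈ W) (hα : α ∈ Phi W) :
    w α ∈ Phi W := by
  refine ⟨by rw [w.norm_map]; exact hα.1, ?_⟩
  rw [← sHyp_conj w hα.1]
  exact W.mul_mem (W.mul_mem hw hα.2) (W.inv_mem hw)

lemma phi_neg {α : V} (hα : α ∈ Phi W) : -α ∈ Phi W := by
  refine ⟨by rw [norm_neg]; exact hα.1, ?_⟩
  rw [sHyp_span_eq (span_singleton_neg α)]
  exact hα.2

lemma unit_span_pm {α β : V} (hα : ‖α‖ = 1) (hβ : ‖β‖ = 1) (h : (ℝ ∙ α) = ℝ ∙ β) :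
    α = β ∨ α = -β := by
  have hmem : α ∈ (ℝ ∙ β : Submodule ℝ V) := h ▸ Submodule.mem_span_singleton_self α
  obtain ⟨c, hc⟩ := Submodule.mem_span_singleton.mp hmem
  have : ‖c • β‖ = 1 := by rw [hc]; exact hα
  rw [norm_smul, hβ, mul_one, Real.norm_eq_abs] at this
  rcases abs_eq (by norm_num : (0:ℝ) ≤ 1) |>.mp this with rfl | rfl
  · left; rw [← hc, one_smul]
  · right; rw [← hc]; module

lemma phi_finite [Finite W] : (Phi W).Finite := by
  classical
  have hW : (W : Set (V ≃ₗᵢ[ℝ] V)).Finite := Set.toFinite _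
  have hsub : Phi W ⊆ ⋃ g ∈ (W : Set (V ≃ₗᵢ[ℝ] V)), {α : V | ‖α‖ = 1 ∧ sHyp α = g} := by
    intro α hα
    exact Set.mem_biUnion hα.2 ⟨hα.1, rfl⟩
  refine Set.Finite.subset (Set.Finite.biUnion hW ?_) hsub
  intro g hg
  rcases Set.eq_empty_or_nonempty {α : V | ‖α‖ = 1 ∧ sHyp α = g} with he | ⟨β, hβ⟩
  · rw [he]; exact Set.finite_empty
  · apply Set.Finite.subset ((Set.finite_singleton (-β)).insert β)
    intro α hα
    have hspan : (ℝ ∙ α) = ℝ ∙ β := by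
      have h1 : fixedSub (sHyp α) = fixedSub (sHyp β) := by rw [hα.2, hβ.2]
      rw [fixedSub_sHyp hα.1, fixedSub_sHyp hβ.1] at h1
      calc (ℝ ∙ α) = (ℝ ∙ α)ᗮᗮ := (Submodule.orthogonal_orthogonal _).symm
        _ = (ℝ ∙ β)ᗮᗮ := by rw [h1]
        _ = ℝ ∙ β := Submodule.orthogonal_orthogonal _
    rcases unit_span_pm hα.1 hβ.1 hspan with rfl | rfl
    · exact Set.mem_insert _ _
    · exact Set.mem_insert_of_mem _ rfl

/-- cone of nonnegative combinations -/
def InCone (Δ : Finset V) (v : V) : Prop :=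
  ∃ c : V → ℝ, (∀ δ ∈ Δ, 0 ≤ c δ) ∧ ∑ δ ∈ Δ, c δ • δ = v

lemma inCone_self {Δ : Finset V} {δ : V} (h : δ ∈ Δ) : InCone Δ δ := by
  classical
  refine ⟨fun β => if β = δ then 1 else 0, fun β _ => by positivity, ?_⟩
  rw [Finset.sum_congr rfl (fun β _ => by rw [ite_smul, one_smul, zero_smul])]
  rw [Finset.sum_ite_eq' Δ δ (fun β => β)]
  simp [h]

lemma inCone_subst {Δ : Finset V} {γ : V} (hγ : γ ∈ Δ)
    (hγc : InCone (Δ.erase γ) γ) {v : V} (hv : InCone Δ v) : InCone (Δ.erase γ) v := by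
  classical
  obtain ⟨c, hc0, hcs⟩ := hv
  obtain ⟨t, ht0, hts⟩ := hγc
  refine ⟨fun β => c β + c γ * t β, fun β hβ => by
    have h1 := hc0 β (Finset.erase_subset _ _ hβ)
    have h2 := ht0 β hβ
    have h3 := hc0 γ hγ
    positivity, ?_⟩
  have hsplit : ∑ δ ∈ Δ, c δ • δ = c γ • γ + ∑ δ ∈ Δ.erase γ, c δ • δ := by
    rw [← Finset.add_sum_erase Δ _ hγ]
  have : ∑ β ∈ Δ.erase γ, (c β + c γ * t β) • β =
      ∑ β ∈ Δ.erase γ, c β • β + c γ • ∑ β ∈ Δ.erase γ, t β • β := by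
    rw [Finset.smul_sum, ← Finset.sum_add_distrib]
    exact Finset.sum_congr rfl (fun β _ => by rw [add_smul, smul_smul])
  rw [this, hts, ← hcs, hsplit]
  abel

end RootSystem

section SimpleSystem

variable {W : Subgroup (V ≃ₗᵢ[ℝ] V)}

def Pos (W : Subgroup (V ≃ₗᵢ[ℝ] V)) (x : V) : Set V := {α | α ∈ Phi W ∧ 0 < ⟪x, α⟫}

lemma pos_dichot {x : V} (hgen : ∀ α ∈ Phi W, ⟪x, α⟫ ≠ 0) {α : V} (hα : α ∈ Phi W) :
    α ∈ Pos W x ∨ -α ∈ Pos W x := by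
  rcases lt_or_gt_of_ne (hgen α hα) with h | h
  · right
    refine ⟨phi_neg hα, ?_⟩
    rw [inner_neg_right]
    linarith
  · left; exact ⟨hα, h⟩

lemma pos_finite [Finite W] (x : V) : (Pos W x).Finite :=
  Set.Finite.subset phi_finite (fun _ h => h.1)

lemma exists_simple [Finite W] (x : V) :
    ∃ Δ : Finset V, ↑Δ ⊆ Pos W x ∧ (∀ β ∈ Pos W x, InCone Δ β) ∧
      (∀ Δ' : Finset V, ↑Δ' ⊆ Pos W x → (∀ β ∈ Pos W x, InCone Δ' β) →
        Δ.card ≤ Δ'.card) := by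
  classical
  set P : Finset V := (pos_finite (W := W) x).toFinset with hP
  have hPmem : ∀ α, α ∈ P ↔ α ∈ Pos W x := fun α => Set.Finite.mem_toFinset _
  obtain ⟨Δ, hΔmem, hΔmin⟩ := Finset.exists_min_image
    (P.powerset.filter (fun Δ => ∀ β ∈ Pos W x, InCone Δ β)) Finset.card
    ⟨P, Finset.mem_filter.mpr ⟨Finset.mem_powerset_self P,
      fun β hβ => inCone_self ((hPmem β).mpr hβ)⟩⟩
  rw [Finset.mem_filter, Finset.mem_powerset] at hΔmem
  refine ⟨Δ, fun α hα => (hPmem α).mp (hΔmem.1 hα), hΔmem.2, ?_⟩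
  intro Δ' hΔ'P hΔ'gen
  -- Δ' might not be ⊆ P... but it is: Δ' ⊆ Pos = P
  have : Δ' ∈ P.powerset.filter (fun Δ => ∀ β ∈ Pos W x, InCone Δ β) :=
    Finset.mem_filter.mpr ⟨Finset.mem_powerset.mpr (fun a ha => (hPmem a).mpr (hΔ'P ha)),
      hΔ'gen⟩
  exact hΔmin Δ' this

lemma simple_perm [Finite W] {x : V} (hgen : ∀ α ∈ Phi W, ⟪x, α⟫ ≠ 0)
    {Δ : Finset V} (hΔP : ↑Δ ⊆ Pos W x) (hΔgen : ∀ β ∈ Pos W x, InCone Δ β)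
    (hmin : ∀ Δ' : Finset V, ↑Δ' ⊆ Pos W x → (∀ β ∈ Pos W x, InCone Δ' β) →
      Δ.card ≤ Δ'.card)
    {γ : V} (hγ : γ ∈ Δ) {β : V} (hβ : β ∈ Pos W x) (hne : β ≠ γ) :
    sHyp γ β ∈ Pos W x := by
  classical
  have hγP : γ ∈ Pos W x := hΔP hγ
  have hγΦ : γ ∈ Phi W := hγP.1
  have hβΦ : β ∈ Phi W := hβ.1
  have hγn : ‖γ‖ = 1 := phi_norm hγΦ
  have hβn : ‖β‖ = 1 := phi_norm hβΦ
  have hsβΦ : sHyp γ β ∈ Phi W := phi_stable' (phi_refl_mem hγΦ) hβΦ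
  rcases pos_dichot hgen hsβΦ with h | h
  · exact h
  exfalso
  set k : ℝ := 2 * ⟪β, γ⟫ with hk
  have hform : sHyp γ β = β - k • γ := sHyp_apply hγn β
  obtain ⟨b, hb0, hbs⟩ := hΔgen β hβ
  obtain ⟨d, hd0, hds⟩ := hΔgen _ h
  set e : V → ℝ := fun δ => b δ + d δ with he
  have he0 : ∀ δ ∈ Δ, 0 ≤ e δ := fun δ hδ => add_nonneg (hb0 δ hδ) (hd0 δ hδ)
  have hsum : ∑ δ ∈ Δ, e δ • δ = k • γ := by
    have : ∑ δ ∈ Δ, e δ • δ = ∑ δ ∈ Δ, b δ • δ + ∑ δ ∈ Δ, d δ • δ := by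
      rw [← Finset.sum_add_distrib]
      exact Finset.sum_congr rfl (fun δ _ => add_smul _ _ _)
    rw [this, hbs, hds, hform]
    abel
  have hxδ : ∀ δ ∈ Δ, 0 < ⟪x, δ⟫ := fun δ hδ => (hΔP hδ).2
  have hpair : ∑ δ ∈ Δ, e δ * ⟪x, δ⟫ = k * ⟪x, γ⟫ := by
    have h1 : ⟪x, ∑ δ ∈ Δ, e δ • δ⟫ = ∑ δ ∈ Δ, e δ * ⟪x, δ⟫ := by
      rw [inner_sum]
      exact Finset.sum_congr rfl (fun δ _ => real_inner_smul_right _ _ _)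
    rw [← h1, hsum, real_inner_smul_right]
  have hterm0 : ∀ δ ∈ Δ, 0 ≤ e δ * ⟪x, δ⟫ :=
    fun δ hδ => mul_nonneg (he0 δ hδ) (le_of_lt (hxδ δ hδ))
  have hxγ : 0 < ⟪x, γ⟫ := hγP.2
  rcases le_or_gt k 0 with hkle | hkpos
  · -- k ≤ 0 : everything vanishes, β = 0
    have hsle : ∑ δ ∈ Δ, e δ * ⟪x, δ⟫ ≤ 0 := by
      rw [hpair]
      exact mul_nonpos_iff.mpr (Or.inr ⟨hkle, le_of_lt hxγ⟩)
    have hse : ∑ δ ∈ Δ, e δ * ⟪x, δ⟫ = 0 :=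
      le_antisymm hsle (Finset.sum_nonneg hterm0)
    have hzero : ∀ δ ∈ Δ, e δ = 0 := by
      intro δ hδ
      have := (Finset.sum_eq_zero_iff_of_nonneg hterm0).mp hse δ hδ
      rcases mul_eq_zero.mp this with h' | h'
      · exact h'
      · exact absurd h' (ne_of_gt (hxδ δ hδ))
    have hb00 : ∀ δ ∈ Δ, b δ = 0 := by
      intro δ hδ
      have h1 := hb0 δ hδ
      have h2 := hd0 δ hδ
      have h3 := hzero δ hδ
      rw [he] at h3
      simp only at h3
      linarith
    have : β = 0 := by
      rw [← hbs]
      exact Finset.sum_eq_zero (fun δ hδ => by rw [hb00 δ hδ, zero_smul])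
    rw [this, norm_zero] at hβn
    norm_num at hβn
  rcases lt_or_ge (e γ) k with heγ | heγ
  · -- e γ < k : γ is in the cone of the rest, contradicting minimality
    have hvec : ∑ δ ∈ Δ.erase γ, e δ • δ = (k - e γ) • γ := by
      have h1 : e γ • γ + ∑ δ ∈ Δ.erase γ, e δ • δ = k • γ := by
        rw [Finset.add_sum_erase Δ (fun δ => e δ • δ) hγ]; exact hsum
      have h2 : ∑ δ ∈ Δ.erase γ, e δ • δ = k • γ - e γ • γ := by
        rw [← h1]; abel
      rw [h2, ← sub_smul]
    have hpos : 0 < k - e γ := by linarith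
    have hγcone : InCone (Δ.erase γ) γ := by
      refine ⟨fun δ => (k - e γ)⁻¹ * e δ, fun δ hδ =>
        mul_nonneg (le_of_lt (inv_pos.mpr hpos)) (he0 δ (Finset.erase_subset _ _ hδ)), ?_⟩
      have : ∑ δ ∈ Δ.erase γ, ((k - e γ)⁻¹ * e δ) • δ =
          (k - e γ)⁻¹ • ∑ δ ∈ Δ.erase γ, e δ • δ := by
        rw [Finset.smul_sum]
        exact Finset.sum_congr rfl (fun δ _ => by rw [smul_smul])
      rw [this, hvec, smul_smul, inv_mul_cancel₀ (ne_of_gt hpos), one_smul]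
    have hgen' : ∀ β' ∈ Pos W x, InCone (Δ.erase γ) β' :=
      fun β' hβ' => inCone_subst hγ hγcone (hΔgen β' hβ')
    have hsub' : ↑(Δ.erase γ) ⊆ Pos W x :=
      fun a ha => hΔP (Finset.erase_subset _ _ ha)
    have := hmin (Δ.erase γ) hsub' hgen'
    have hlt := Finset.card_erase_lt_of_mem hγ
    omega
  · -- k ≤ e γ : forces β = γ
    have hsplit : e γ * ⟪x, γ⟫ + ∑ δ ∈ Δ.erase γ, e δ * ⟪x, δ⟫ = k * ⟪x, γ⟫ := by
      rw [Finset.add_sum_erase Δ (fun δ => e δ * ⟪x, δ⟫) hγ]; exact hpair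
    have hle0 : ∑ δ ∈ Δ.erase γ, e δ * ⟪x, δ⟫ = (k - e γ) * ⟪x, γ⟫ := by
      rw [sub_mul]; linarith
    have hterm0' : ∀ δ ∈ Δ.erase γ, 0 ≤ e δ * ⟪x, δ⟫ :=
      fun δ hδ => hterm0 δ (Finset.erase_subset _ _ hδ)
    have hsum0 : ∑ δ ∈ Δ.erase γ, e δ * ⟪x, δ⟫ = 0 := by
      have hge := Finset.sum_nonneg hterm0'
      have hle : (k - e γ) * ⟪x, γ⟫ ≤ 0 :=
        mul_nonpos_iff.mpr (Or.inr ⟨by linarith, le_of_lt hxγ⟩)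
      linarith
    have hzero : ∀ δ ∈ Δ.erase γ, e δ = 0 := by
      intro δ hδ
      have := (Finset.sum_eq_zero_iff_of_nonneg hterm0').mp hsum0 δ hδ
      rcases mul_eq_zero.mp this with h' | h'
      · exact h'
      · exact absurd h' (ne_of_gt (hxδ δ (Finset.erase_subset _ _ hδ)))
    have hb00 : ∀ δ ∈ Δ.erase γ, b δ = 0 := by
      intro δ hδ
      have h1 := hb0 δ (Finset.erase_subset _ _ hδ)
      have h2 := hd0 δ (Finset.erase_subset _ _ hδ)
      have h3 := hzero δ hδ
      rw [he] at h3
      simp only at h3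
      linarith
    have hβγ : β = b γ • γ := by
      rw [← hbs, ← Finset.add_sum_erase Δ (fun δ => b δ • δ) hγ]
      rw [Finset.sum_eq_zero (fun δ hδ => by rw [hb00 δ hδ, zero_smul]), add_zero]
    have hbγ : b γ = 1 := by
      have h1 : ‖β‖ = |b γ| * ‖γ‖ := by rw [hβγ, norm_smul, Real.norm_eq_abs]
      rw [hβn, hγn, mul_one] at h1
      have h2 := hb0 γ hγ
      rcases abs_eq (by norm_num : (0:ℝ) ≤ 1) |>.mp h1.symm with h' | h'
      · exact h'
      · linarith
    exact hne (by rw [hβγ, hbγ, one_smul])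

end SimpleSystem

section Steinberg

variable {W : Subgroup (V ≃ₗᵢ[ℝ] V)}

lemma sHyp_self {α : V} (hα : ‖α‖ = 1) : sHyp α α = -α := by
  rw [sHyp_apply hα, real_inner_self_eq_norm_sq, hα]
  module

lemma refl_mem_closure [Finite W] {x : V} (hgen : ∀ α ∈ Phi W, ⟪x, α⟫ ≠ 0)
    {Δ : Finset V} (hΔP : ↑Δ ⊆ Pos W x) (hΔgen : ∀ β ∈ Pos W x, InCone Δ β)
    (hmin : ∀ Δ' : Finset V, ↑Δ' ⊆ Pos W x → (∀ β ∈ Pos W x, InCone Δ' β) →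
      Δ.card ≤ Δ'.card) :
    ∀ α ∈ Pos W x, sHyp α ∈ Subgroup.closure ((fun δ => sHyp δ) '' ↑Δ) := by
  classical
  set c := Subgroup.closure ((fun δ => sHyp δ) '' (↑Δ : Set V)) with hc
  set m : V → ℕ := fun α => ((pos_finite (W := W) x).toFinset.filter
    (fun β => ⟪x, β⟫ < ⟪x, α⟫)).card with hm
  suffices H : ∀ n, ∀ α ∈ Pos W x, m α ≤ n → sHyp α ∈ c by
    intro α hα; exact H (m α) α hα le_rfl
  intro n
  induction n using Nat.strong_induction_on with
  | _ n ih =>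
    intro α hα hmn
    by_cases hαΔ : α ∈ Δ
    · exact Subgroup.subset_closure ⟨α, hαΔ, rfl⟩
    -- find δ ∈ Δ with positive inner products
    obtain ⟨b, hb0, hbs⟩ := hΔgen α hα
    have hαn : ‖α‖ = 1 := phi_norm hα.1
    have hsum : ∑ δ ∈ Δ, b δ * ⟪α, δ⟫ = 1 := by
      have h1 : ⟪α, ∑ δ ∈ Δ, b δ • δ⟫ = ∑ δ ∈ Δ, b δ * ⟪α, δ⟫ := by
        rw [inner_sum]
        exact Finset.sum_congr rfl (fun δ _ => real_inner_smul_right _ _ _)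
      rw [← h1, hbs, real_inner_self_eq_norm_sq, hαn]
      norm_num
    have hexists : ∃ δ ∈ Δ, 0 < b δ * ⟪α, δ⟫ := by
      by_contra hno
      push_neg at hno
      have := Finset.sum_nonpos hno
      rw [hsum] at this
      norm_num at this
    obtain ⟨δ, hδΔ, hδpos⟩ := hexists
    have hαδ : 0 < ⟪α, δ⟫ := by
      by_contra h
      push_neg at h
      nlinarith [hb0 δ hδΔ]
    have hαδne : α ≠ δ := fun h => hαΔ (h ▸ hδΔ)
    have hα' : sHyp δ α ∈ Pos W x := simple_perm hgen hΔP hΔgen hmin hδΔ hα hαδne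
    have hδP : δ ∈ Pos W x := hΔP hδΔ
    have hδn : ‖δ‖ = 1 := phi_norm hδP.1
    have hval : ⟪x, sHyp δ α⟫ < ⟪x, α⟫ := by
      rw [sHyp_apply hδn, inner_sub_right, real_inner_smul_right]
      have h1 : 0 < ⟪x, δ⟫ := hδP.2
      have h2 : 0 < 2 * ⟪α, δ⟫ := by linarith
      nlinarith
    have hmlt : m (sHyp δ α) < m α := by
      apply Finset.card_lt_card
      constructor
      · intro β hβ
        rw [Finset.mem_filter] at *
        exact ⟨hβ.1, lt_trans hβ.2 hval⟩
      · intro hsub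
        have h1 : sHyp δ α ∈ (pos_finite (W := W) x).toFinset.filter
            (fun β => ⟪x, β⟫ < ⟪x, α⟫) := by
          rw [Finset.mem_filter]
          exact ⟨(Set.Finite.mem_toFinset _).mpr hα', hval⟩
        have h2 := hsub h1
        rw [Finset.mem_filter] at h2
        exact absurd h2.2 (lt_irrefl _)
    have hIH : sHyp (sHyp δ α) ∈ c := ih (m (sHyp δ α)) (by omega) _ hα' le_rfl
    have hδc : sHyp δ ∈ c := Subgroup.subset_closure ⟨δ, hδΔ, rfl⟩
    have hkey : sHyp α = sHyp δ * sHyp (sHyp δ α) * (sHyp δ)⁻¹ := by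
      rw [sHyp_conj (sHyp δ) (by rw [(sHyp δ).norm_map]; exact hαn)]
      congr 1
      have h3 : ∀ v, sHyp δ (sHyp δ v) = v := fun v =>
        congrArg (fun f : V ≃ₗᵢ[ℝ] V => f v) sHyp_mul_self
      rw [h3]
    rw [hkey]
    exact Subgroup.mul_mem _ (Subgroup.mul_mem _ hδc hIH) (Subgroup.inv_mem _ hδc)

end Steinberg

section Steinberg2

variable {W : Subgroup (V ≃ₗᵢ[ℝ] V)}

lemma exists_word {Δ : Finset V} {w : V ≃ₗᵢ[ℝ] V}
    (hw : w ∈ Subgroup.closure ((fun δ => sHyp δ) '' (↑Δ : Set V))) :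
    ∃ L : List V, (∀ δ ∈ L, δ ∈ Δ) ∧ (L.map sHyp).prod = w := by
  classical
  have h1 : w ∈ Submonoid.closure (((fun δ => sHyp δ) '' (↑Δ : Set V)) ∪
      ((fun δ => sHyp δ) '' (↑Δ : Set V))⁻¹) := by
    rw [← Subgroup.closure_toSubmonoid]
    exact hw
  obtain ⟨l, hl, hprod⟩ := Submonoid.exists_list_of_mem_closure h1
  -- convert each entry to a root
  have hentry : ∀ g ∈ l, ∃ δ ∈ Δ, sHyp δ = g := by
    intro g hg
    rcases hl g hg with h | h
    · obtain ⟨δ, hδ, rfl⟩ := h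
      exact ⟨δ, hδ, rfl⟩
    · rw [Set.mem_inv] at h
      obtain ⟨δ, hδ, heq⟩ := h
      refine ⟨δ, hδ, ?_⟩
      have : g⁻¹ = sHyp δ := heq.symm
      rw [← sHyp_inv, ← this, inv_inv]
  have key : ∀ l : List (V ≃ₗᵢ[ℝ] V), (∀ g ∈ l, ∃ δ ∈ Δ, sHyp δ = g) →
      ∃ L : List V, (∀ δ ∈ L, δ ∈ Δ) ∧ (L.map sHyp).prod = l.prod := by
    intro l
    induction l with
    | nil => intro _; exact ⟨[], by simp, by simp⟩
    | cons g t ih =>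
      intro hent
      obtain ⟨δ, hδ, hgδ⟩ := hent g List.mem_cons_self
      obtain ⟨L, hL1, hL2⟩ := ih (fun g' hg' => hent g' (List.mem_cons_of_mem _ hg'))
      refine ⟨δ :: L, ?_, ?_⟩
      · intro a ha
        rcases List.mem_cons.mp ha with rfl | h
        · exact hδ
        · exact hL1 a h
      · rw [List.map_cons, List.prod_cons, hL2, hgδ, List.prod_cons]
  obtain ⟨L, h1, h2⟩ := key l hentry
  exact ⟨L, h1, by rw [h2, hprod]⟩


lemma prod_word_mem {L : List V} (hL : ∀ δ ∈ L, δ ∈ Phi W) :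
    (L.map sHyp).prod ∈ W := by
  apply Subgroup.list_prod_mem
  intro g hg
  rw [List.mem_map] at hg
  obtain ⟨δ, hδ, rfl⟩ := hg
  exact phi_refl_mem (hL δ hδ)

lemma walk [Finite W] {x : V} (hgen : ∀ α ∈ Phi W, ⟪x, α⟫ ≠ 0)
    {Δ : Finset V} (hΔP : ↑Δ ⊆ Pos W x) (hΔgen : ∀ β ∈ Pos W x, InCone Δ β)
    (hmin : ∀ Δ' : Finset V, ↑Δ' ⊆ Pos W x → (∀ β ∈ Pos W x, InCone Δ' β) →
      Δ.card ≤ Δ'.card) :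
    ∀ L : List V, (∀ δ ∈ L, δ ∈ Δ) → ∀ γ ∈ Δ, (-(((L.map sHyp).prod) γ)) ∈ Pos W x →
    ∃ L' : List V, (∀ δ ∈ L', δ ∈ Δ) ∧ L'.length + 1 = L.length ∧
      (L'.map sHyp).prod = (L.map sHyp).prod * sHyp γ := by
  classical
  intro L
  induction L with
  | nil =>
    intro _ γ hγ hneg
    exfalso
    have h1 : ((([] : List V).map sHyp).prod) γ = γ := rfl
    rw [h1] at hneg
    have h2 : 0 < ⟪x, γ⟫ := (hΔP hγ).2
    have h3 : 0 < ⟪x, -γ⟫ := hneg.2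
    rw [inner_neg_right] at h3
    linarith
  | cons δ T ih =>
    intro hL γ hγ hneg
    have hδΔ : δ ∈ Δ := hL δ List.mem_cons_self
    have hδP : δ ∈ Pos W x := hΔP hδΔ
    have hδn : ‖δ‖ = 1 := phi_norm hδP.1
    have hT : ∀ d ∈ T, d ∈ Δ := fun d hd => hL d (List.mem_cons_of_mem _ hd)
    set q : V ≃ₗᵢ[ℝ] V := (T.map sHyp).prod with hq
    have hprodL : ((δ :: T).map sHyp).prod = sHyp δ * q := by
      rw [List.map_cons, List.prod_cons]
    have hγP : γ ∈ Pos W x := hΔP hγ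
    have hγΦ : γ ∈ Phi W := hγP.1
    have hqW : q ∈ W := prod_word_mem (fun d hd => (hΔP (hT d hd)).1)
    have hqγΦ : q γ ∈ Phi W := phi_stable' hqW hγΦ
    rw [hprodL] at hneg
    have hneg' : (-(sHyp δ (q γ))) ∈ Pos W x := hneg
    rcases pos_dichot hgen hqγΦ with hpos | hqneg
    · -- q γ positive : then q γ = δ
      have hqγδ : q γ = δ := by
        by_contra hne
        have := simple_perm hgen hΔP hΔgen hmin hδΔ hpos hne
        have h2 : 0 < ⟪x, sHyp δ (q γ)⟫ := this.2
        have h3 : 0 < ⟪x, -(sHyp δ (q γ))⟫ := hneg'.2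
        rw [inner_neg_right] at h3
        linarith
      have hconj : sHyp δ = q * sHyp γ * q⁻¹ := by
        rw [← hqγδ]
        exact (sHyp_conj q (phi_norm hγΦ)).symm
      refine ⟨T, hT, by simp [List.length_cons], ?_⟩
      rw [hprodL, hconj]
      rw [inv_mul_cancel_right, mul_assoc, sHyp_mul_self, mul_one, hq]
    · -- q γ negative : recurse
      obtain ⟨T', hT'1, hT'2, hT'3⟩ := ih hT γ hγ hqneg
      refine ⟨δ :: T', ?_, by simp [List.length_cons]; omega, ?_⟩
      · intro a ha
        rcases List.mem_cons.mp ha with rfl | h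
        · exact hδΔ
        · exact hT'1 a h
      · rw [List.map_cons, List.prod_cons, hT'3, hprodL, mul_assoc]

lemma no_pos_preserving [Finite W]
    (hWgen : Subgroup.closure {g : V ≃ₗᵢ[ℝ] V | g ∈ W ∧ IsReflection g} = W)
    {x : V} (hgen : ∀ α ∈ Phi W, ⟪x, α⟫ ≠ 0)
    {w : V ≃ₗᵢ[ℝ] V} (hw : w ∈ W) (hpos : ∀ α ∈ Pos W x, w α ∈ Pos W x) : w = 1 := by
  classical
  obtain ⟨Δ, hΔP, hΔgen, hmin⟩ := exists_simple (W := W) x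
  -- W is contained in the closure of the simple reflections
  have hWle : W ≤ Subgroup.closure ((fun δ => sHyp δ) '' (↑Δ : Set V)) := by
    rw [← hWgen]
    apply Subgroup.closure_le _ |>.mpr
    rintro g ⟨hgW, hgrefl⟩
    obtain ⟨α, hαn, hαfix, rfl⟩ := hgrefl.exists_root
    have hαΦ : α ∈ Phi W := ⟨hαn, hgW⟩
    rcases pos_dichot hgen hαΦ with h | h
    · exact refl_mem_closure hgen hΔP hΔgen hmin α h
    · have := refl_mem_closure hgen hΔP hΔgen hmin (-α) h
      rwa [sHyp_span_eq (span_singleton_neg α)] at this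
  obtain ⟨L0, hL0, hL0prod⟩ := exists_word (hWle hw)
  -- take a minimal length word
  have hPex : ∃ n, ∃ L : List V, (∀ δ ∈ L, δ ∈ Δ) ∧ L.length = n ∧ (L.map sHyp).prod = w :=
    ⟨L0.length, L0, hL0, rfl, hL0prod⟩
  set Q : ℕ → Prop := fun n => ∃ L : List V, (∀ δ ∈ L, δ ∈ Δ) ∧ L.length = n ∧
    (L.map sHyp).prod = w with hQ
  have hQex : ∃ n, Q n := by
    obtain ⟨n, h⟩ := hPex
    exact ⟨n, h⟩
  have hn0 := Nat.find_spec hQex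
  set n0 := Nat.find hQex with hn0def
  obtain ⟨L, hLΔ, hLlen, hLprod⟩ := hn0
  rcases List.eq_nil_or_concat L with rfl | ⟨L₀, γ, rfl⟩
  · rw [← hLprod]; rfl
  exfalso
  have hγΔ : γ ∈ Δ := hLΔ γ (by simp)
  have hγP : γ ∈ Pos W x := hΔP hγΔ
  have hγn : ‖γ‖ = 1 := phi_norm hγP.1
  have hL₀Δ : ∀ d ∈ L₀, d ∈ Δ := fun d hd => hLΔ d (by simp [hd])
  set p : V ≃ₗᵢ[ℝ] V := (L₀.map sHyp).prod with hp
  have hsplit : w = p * sHyp γ := by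
    rw [← hLprod, List.concat_eq_append, List.map_append, List.prod_append]
    simp [hp]
  have hwγ : w γ = -(p γ) := by
    rw [hsplit]
    show p (sHyp γ γ) = -(p γ)
    rw [sHyp_self hγn, map_neg]
  have hwγP : w γ ∈ Pos W x := hpos γ hγP
  have hnegP : (-(p γ)) ∈ Pos W x := by rw [← hwγ]; exact hwγP
  obtain ⟨L', hL'Δ, hL'len, hL'prod⟩ := walk hgen hΔP hΔgen hmin L₀ hL₀Δ γ hγΔ hnegP
  have hL'w : (L'.map sHyp).prod = w := by
    rw [hL'prod, ← hp]
    exact hsplit.symm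
  have hmin' : n0 ≤ L'.length := by
    rw [hn0def]
    exact Nat.find_le ⟨L', hL'Δ, rfl, hL'w⟩
  have hlen2 : (L₀.concat γ).length = L₀.length + 1 := by simp
  omega

lemma fixed_generic_eq_one [Finite W]
    (hWgen : Subgroup.closure {g : V ≃ₗᵢ[ℝ] V | g ∈ W ∧ IsReflection g} = W)
    {x : V} (hgen : ∀ α ∈ Phi W, ⟪x, α⟫ ≠ 0)
    {w : V ≃ₗᵢ[ℝ] V} (hw : w ∈ W) (hx : w x = x) : w = 1 := by
  apply no_pos_preserving hWgen hgen hw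
  intro α hα
  refine ⟨phi_stable' hw hα.1, ?_⟩
  have h1 : w⁻¹ x = x := by
    calc w⁻¹ x = w⁻¹ (w x) := by rw [hx]
      _ = x := w.symm_apply_apply x
  have h2 : ⟪x, w α⟫ = ⟪x, α⟫ := by
    have h3 := w.inner_map_map (w⁻¹ x) α
    have h4 : w (w⁻¹ x) = x := w.apply_symm_apply x
    rw [h4, h1] at h3
    exact h3
  rw [h2]
  exact hα.2

/-- Steinberg-lite: any non-identity element of W has its fixed space inside
some reflection hyperplane. -/
lemma exists_refl_hyperplane [Finite W]
    (hWgen : Subgroup.closure {g : V ≃ₗᵢ[ℝ] V | g ∈ W ∧ IsReflection g} = W)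
    {w : V ≃ₗᵢ[ℝ] V} (hw : w ∈ W) (hne : w ≠ 1) :
    ∃ α ∈ Phi W, fixedSub w ≤ (ℝ ∙ α)ᗮ := by
  classical
  by_contra hno
  push_neg at hno
  set T : Finset (Submodule ℝ V) :=
    (phi_finite (W := W)).toFinset.image (fun α => (ℝ ∙ α)ᗮ) with hT
  have hTprop : ∀ L ∈ T, ¬ fixedSub w ≤ L := by
    intro L hL
    rw [hT, Finset.mem_image] at hL
    obtain ⟨α, hα, rfl⟩ := hL
    exact hno α ((Set.Finite.mem_toFinset _).mp hα)
  obtain ⟨x, hxK, hx⟩ := exists_avoid (fixedSub w) T hTprop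
  have hgen : ∀ α ∈ Phi W, ⟪x, α⟫ ≠ 0 := by
    intro α hα h0
    have hmem : x ∈ ((ℝ ∙ α)ᗮ : Submodule ℝ V) := mem_orthSingleton.mpr h0
    exact hx _ (Finset.mem_image_of_mem _ ((Set.Finite.mem_toFinset _).mpr hα)) hmem
  exact hne (fixed_generic_eq_one hWgen hgen hw (mem_fixedSub.mp hxK))

end Steinberg2

section Main

variable {W : Subgroup (V ≃ₗᵢ[ℝ] V)}
variable {A : Set (Submodule ℝ V)} {r : Submodule ℝ V → (V ≃ₗᵢ[ℝ] V)}
variable {ord : Submodule ℝ V → ℕ}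

lemma A_hyper (hA : A = {H | ∃ g ∈ W, IsReflection g ∧ fixedSub g = H})
    {H : Submodule ℝ V} (hH : H ∈ A) : Hyper H := by
  rw [hA] at hH
  obtain ⟨g, hgW, hgrefl, rfl⟩ := hH
  haveI := hgrefl.nontrivial
  exact ⟨hgrefl.2.2, finrank_pos⟩

lemma A_finite [Finite W] (hA : A = {H | ∃ g ∈ W, IsReflection g ∧ fixedSub g = H}) :
    A.Finite := by
  have : A ⊆ (fun g => fixedSub g) '' (W : Set (V ≃ₗᵢ[ℝ] V)) := by
    rw [hA]
    rintro H ⟨g, hgW, _, rfl⟩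
    exact ⟨g, hgW, rfl⟩
  exact Set.Finite.subset (Set.Finite.image _ (Set.toFinite _)) this

lemma steinberg_A [Finite W]
    (hgen : Subgroup.closure {g : V ≃ₗᵢ[ℝ] V | g ∈ W ∧ IsReflection g} = W)
    (hA : A = {H | ∃ g ∈ W, IsReflection g ∧ fixedSub g = H})
    {w : V ≃ₗᵢ[ℝ] V} (hw : w ∈ W) (hne : w ≠ 1) :
    ∃ H ∈ A, fixedSub w ≤ H := by
  obtain ⟨α, hαΦ, hle⟩ := exists_refl_hyperplane hgen hw hne
  refine ⟨(ℝ ∙ α)ᗮ, ?_, hle⟩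
  rw [hA]
  exact ⟨sHyp α, phi_refl_mem hαΦ, isReflection_sHyp (phi_norm hαΦ),
    fixedSub_sHyp (phi_norm hαΦ)⟩

lemma rH_descent (hr : ∀ H ∈ A, r H ∈ W ∧ IsReflection (r H) ∧ fixedSub (r H) = H)
    {H : Submodule ℝ V} (hH : H ∈ A) {w : V ≃ₗᵢ[ℝ] V} (hle : fixedSub w ≤ H) :
    finrank ℝ (fixedSub (r H * w)) = finrank ℝ (fixedSub w) + 1 := by
  obtain ⟨α, hαn, hfix, heq⟩ := (hr H hH).2.1.exists_root
  have hHα : H = (ℝ ∙ α)ᗮ := by rw [← (hr H hH).2.2, hfix]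
  rw [heq]
  exact fixedSub_mul_of_le hαn (hHα ▸ hle)

lemma rH_ascent (hr : ∀ H ∈ A, r H ∈ W ∧ IsReflection (r H) ∧ fixedSub (r H) = H)
    {H : Submodule ℝ V} (hH : H ∈ A) {w : V ≃ₗᵢ[ℝ] V} (hnle : ¬ fixedSub w ≤ H) :
    fixedSub (r H * w) = H ⊓ fixedSub w := by
  obtain ⟨α, hαn, hfix, heq⟩ := (hr H hH).2.1.exists_root
  have hHα : H = (ℝ ∙ α)ᗮ := by rw [← (hr H hH).2.2, hfix]
  rw [heq, fixedSub_mul_of_not_le hαn (hHα ▸ hnle), hHα]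

lemma le_fixedSub_mul (hr : ∀ H ∈ A, r H ∈ W ∧ IsReflection (r H) ∧ fixedSub (r H) = H)
    {H : Submodule ℝ V} (hH : H ∈ A) {w : V ≃ₗᵢ[ℝ] V} (hle : fixedSub w ≤ H) :
    fixedSub w ≤ fixedSub (r H * w) := by
  intro x hx
  have h1 : w x = x := mem_fixedSub.mp hx
  have h2 : r H x = x := mem_fixedSub.mp (by rw [(hr H hH).2.2]; exact hle hx)
  refine mem_fixedSub.mpr ?_
  show r H (w x) = x
  rw [h1, h2]

lemma inf_fixedSub_mul (hr : ∀ H ∈ A, r H ∈ W ∧ IsReflection (r H) ∧ fixedSub (r H) = H)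
    {H : Submodule ℝ V} (hH : H ∈ A) {w : V ≃ₗᵢ[ℝ] V} (hle : fixedSub w ≤ H) :
    H ⊓ fixedSub (r H * w) = fixedSub w := by
  apply le_antisymm
  · intro x hx
    obtain ⟨hx1, hx2⟩ := Submodule.mem_inf.mp hx
    have h1 : r H (w x) = x := mem_fixedSub.mp hx2
    have h2 : r H x = x := mem_fixedSub.mp (by rw [(hr H hH).2.2]; exact hx1)
    have h3 : r H (r H (w x)) = r H x := by rw [h1]
    have h4 : ∀ v, r H (r H v) = v := fun v =>
      congrArg (fun f : V ≃ₗᵢ[ℝ] V => f v) (hr H hH).2.1.2.1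
    rw [h4, h2] at h3
    exact mem_fixedSub.mpr h3
  · exact le_inf hle (le_fixedSub_mul hr hH hle)

/-- Carter direction: for an independent list, the fixed space of the product
is the intersection. -/
lemma fixedSub_prod (hA : A = {H | ∃ g ∈ W, IsReflection g ∧ fixedSub g = H})
    (hr : ∀ H ∈ A, r H ∈ W ∧ IsReflection (r H) ∧ fixedSub (r H) = H) :
    ∀ l : List (Submodule ℝ V), (∀ H ∈ l, H ∈ A) → l.Nodup →
    ArrIndepV l.toFinset → fixedSub ((l.map r).prod) = l.toFinset.inf id := by
  intro l
  induction l with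
  | nil =>
    intro _ _ _
    simp only [List.map_nil, List.prod_nil, List.toFinset_nil, Finset.inf_empty]
    exact fixedSub_one
  | cons H t ih =>
    intro hmem hnd hind
    have hHA : H ∈ A := hmem H List.mem_cons_self
    have htA : ∀ K ∈ t, K ∈ A := fun K hK => hmem K (List.mem_cons_of_mem _ hK)
    have hndt : t.Nodup := (List.nodup_cons.mp hnd).2
    have hHt : H ∉ t.toFinset := by
      rw [List.mem_toFinset]
      exact (List.nodup_cons.mp hnd).1
    have htoF : (H :: t).toFinset = insert H t.toFinset := List.toFinset_cons
    have hthyp : ∀ K ∈ t.toFinset, Hyper K :=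
      fun K hK => A_hyper hA (htA K (List.mem_toFinset.mp hK))
    have hindt : ArrIndepV t.toFinset := by
      apply indep_subset (S := (H :: t).toFinset) ?_ ?_ hind
      · intro K hK
        rw [htoF] at hK
        rcases Finset.mem_insert.mp hK with rfl | h
        · exact A_hyper hA hHA
        · exact hthyp K h
      · rw [htoF]; exact Finset.subset_insert _ _
    have hY := ih htA hndt hindt
    have hnle : ¬ t.toFinset.inf id ≤ H := by
      have := (indep_insert_iff hthyp (A_hyper hA hHA) hHt hindt).mp (htoF ▸ hind)
      exact this
    rw [← hY] at hnle
    have hprod : ((H :: t).map r).prod = r H * (t.map r).prod := by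
      rw [List.map_cons, List.prod_cons]
    rw [hprod, rH_ascent hr hHA hnle, hY, htoF, Finset.inf_insert]
    rfl

end Main

section Main2

variable {W : Subgroup (V ≃ₗᵢ[ℝ] V)}
variable {A : Set (Submodule ℝ V)} {r : Submodule ℝ V → (V ≃ₗᵢ[ℝ] V)}
variable {ord : Submodule ℝ V → ℕ}

lemma exists_sorted (hord : Set.InjOn ord A) :
    ∀ n (S : Finset (Submodule ℝ V)), S.card = n → ↑S ⊆ A →
    ∃ l : List (Submodule ℝ V), l.toFinset = S ∧ l.Nodup ∧
      l.Pairwise (fun H H' => ord H < ord H') := by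
  intro n
  induction n with
  | zero =>
    intro S hcard _
    rw [Finset.card_eq_zero] at hcard
    exact ⟨[], by simp [hcard], List.nodup_nil, List.Pairwise.nil⟩
  | succ n ih =>
    intro S hcard hSA
    have hne : S.Nonempty := Finset.card_pos.mp (by omega)
    obtain ⟨H1, hH1S, hH1min⟩ := Finset.exists_min_image S ord hne
    have hcard' : (S.erase H1).card = n := by
      rw [Finset.card_erase_of_mem hH1S]; omega
    obtain ⟨l', hl'F, hl'nd, hl'p⟩ := ih (S.erase H1) hcard'
      (fun H hH => hSA (Finset.erase_subset _ _ hH))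
    refine ⟨H1 :: l', ?_, ?_, ?_⟩
    · rw [List.toFinset_cons, hl'F, Finset.insert_erase hH1S]
    · rw [List.nodup_cons]
      refine ⟨?_, hl'nd⟩
      rw [← List.mem_toFinset, hl'F]
      exact fun h => (Finset.mem_erase.mp h).1 rfl
    · rw [List.pairwise_cons]
      refine ⟨?_, hl'p⟩
      intro H' hH'
      have hH'e : H' ∈ S.erase H1 := by rw [← hl'F]; exact List.mem_toFinset.mpr hH'
      have h1 := hH1min H' (Finset.mem_erase.mp hH'e).2
      rcases lt_or_eq_of_le h1 with h | h
      · exact h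
      · exfalso
        exact (Finset.mem_erase.mp hH'e).1
          (hord (hSA (Finset.mem_erase.mp hH'e).2) (hSA hH1S) h.symm)

lemma sorted_unique {l1 l2 : List (Submodule ℝ V)} (h1 : l1.Nodup) (h2 : l2.Nodup)
    (hF : l1.toFinset = l2.toFinset)
    (hp1 : l1.Pairwise (fun H H' => ord H < ord H'))
    (hp2 : l2.Pairwise (fun H H' => ord H < ord H')) : l1 = l2 := by
  haveI : IsAntisymm (Submodule ℝ V) (fun H H' => ord H < ord H') :=
    ⟨fun a b hab hba => absurd (lt_trans hab hba) (lt_irrefl _)⟩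
  exact List.Perm.eq_of_pairwise (fun a b _ _ hab hba => absurd (lt_trans hab hba) (lt_irrefl _))
    hp1 hp2 (List.perm_of_nodup_nodup_toFinset_eq h1 h2 hF)

lemma sorted_head_min {t : List (Submodule ℝ V)} {H : Submodule ℝ V}
    (hp : (H :: t).Pairwise (fun H H' => ord H < ord H')) :
    ∀ K ∈ (H :: t).toFinset, ord H ≤ ord K := by
  intro K hK
  rw [List.mem_toFinset] at hK
  rcases List.mem_cons.mp hK with rfl | h
  · exact le_rfl
  · exact le_of_lt ((List.pairwise_cons.mp hp).1 K h)

lemma nbc_subset (hA : A = {H | ∃ g ∈ W, IsReflection g ∧ fixedSub g = H})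
    {S T : Finset (Submodule ℝ V)} (hTS : T ⊆ S) (h : IsNBCV A ord S) :
    IsNBCV A ord T := by
  refine ⟨fun a ha => h.1 (hTS ha), ?_, fun B hB => h.2.2 B (hB.trans hTS)⟩
  exact indep_subset (fun K hK => A_hyper hA (h.1 hK)) hTS h.2.1

lemma nbc_min (hA : A = {H | ∃ g ∈ W, IsReflection g ∧ fixedSub g = H})
    {S : Finset (Submodule ℝ V)} (hnbc : IsNBCV A ord S)
    {H1 : Submodule ℝ V} (hH1 : H1 ∈ S) (hmin : ∀ H ∈ S, ord H1 ≤ ord H)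
    {Hs : Submodule ℝ V} (hHsA : Hs ∈ A) (hle : S.inf id ≤ Hs) : ord H1 ≤ ord Hs := by
  by_cases hHsS : Hs ∈ S
  · exact hmin Hs hHsS
  by_contra hlt
  push_neg at hlt
  obtain ⟨C, hCS, hcirc⟩ := exists_circuit (fun K hK => A_hyper hA (hnbc.1 hK))
    (A_hyper hA hHsA) hHsS hnbc.2.1 hle
  exact hnbc.2.2 C hCS ⟨Hs, hHsA, fun h => hHsS (hCS h), hcirc,
    fun H' hH' => lt_of_lt_of_le hlt (hmin H' (hCS hH'))⟩

end Main2

section Main3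

variable {W : Subgroup (V ≃ₗᵢ[ℝ] V)}
variable {A : Set (Submodule ℝ V)} {r : Submodule ℝ V → (V ≃ₗᵢ[ℝ] V)}
variable {ord : Submodule ℝ V → ℕ}

lemma finrank_inf_le_of_mem {S : Finset (Submodule ℝ V)} {H : Submodule ℝ V} (h : H ∈ S) :
    S.inf id ≤ H := Finset.inf_le (by simpa using h)

lemma nbc_empty (hA : A = {H | ∃ g ∈ W, IsReflection g ∧ fixedSub g = H}) :
    IsNBCV A ord (∅ : Finset (Submodule ℝ V)) := by
  refine ⟨by simp, ?_, ?_⟩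
  · show arrRankV ∅ = Finset.card ∅
    rw [arrRankV, Finset.inf_empty, Finset.card_empty]
    have : finrank ℝ (⊤ : Submodule ℝ V) = finrank ℝ V := finrank_top ℝ V
    omega
  · intro B hB hbroken
    rw [Finset.subset_empty] at hB
    subst hB
    obtain ⟨H, hHA, _, ⟨hnind, _⟩, _⟩ := hbroken
    apply hnind
    show arrRankV (insert H ∅) = _
    have hins : (insert H (∅ : Finset (Submodule ℝ V))) = {H} := rfl
    rw [hins, arrRankV]
    have h1 : ({H} : Finset (Submodule ℝ V)).inf id = H := Finset.inf_singleton
    rw [h1, Finset.card_singleton]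
    obtain ⟨h2, h3⟩ := A_hyper hA hHA
    omega

lemma EX [Finite W]
    (hgen : Subgroup.closure {g : V ≃ₗᵢ[ℝ] V | g ∈ W ∧ IsReflection g} = W)
    (hA : A = {H | ∃ g ∈ W, IsReflection g ∧ fixedSub g = H})
    (hr : ∀ H ∈ A, r H ∈ W ∧ IsReflection (r H) ∧ fixedSub (r H) = H)
    (hord : Set.InjOn ord A) :
    ∀ n : ℕ, ∀ w : V ≃ₗᵢ[ℝ] V, w ∈ W →
    finrank ℝ V = finrank ℝ (fixedSub w) + n →
    ∃ (S : Finset (Submodule ℝ V)) (l : List (Submodule ℝ V)),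
      IsNBCV A ord S ∧ l.toFinset = S ∧ l.Nodup ∧
      l.Pairwise (fun H H' => ord H < ord H') ∧ (l.map r).prod = w ∧
      S.inf id = fixedSub w ∧ S.card = n := by
  intro n
  induction n with
  | zero =>
    intro w hw hrank
    have htop : fixedSub w = ⊤ := Submodule.eq_top_of_finrank_eq (by
      have := finrank_top ℝ V
      omega)
    have hw1 : w = 1 := by
      ext x
      have hx : x ∈ fixedSub w := by rw [htop]; trivial
      exact mem_fixedSub.mp hx
    refine ⟨∅, [], nbc_empty hA, by simp, List.nodup_nil, List.Pairwise.nil, ?_, ?_, rfl⟩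
    · rw [hw1]; rfl
    · rw [Finset.inf_empty, htop]
  | succ n ih =>
    intro w hw hrank
    have hwne : w ≠ 1 := by
      intro h
      rw [h, fixedSub_one] at hrank
      have := finrank_top ℝ V
      omega
    -- the minimal hyperplane above the fixed space
    classical
    set T : Finset (Submodule ℝ V) :=
      (A_finite hA).toFinset.filter (fun H => fixedSub w ≤ H) with hT
    have hTne : T.Nonempty := by
      obtain ⟨H, hHA, hle⟩ := steinberg_A hgen hA hw hwne
      exact ⟨H, Finset.mem_filter.mpr ⟨(Set.Finite.mem_toFinset _).mpr hHA, hle⟩⟩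
    obtain ⟨H1, hH1T, hH1min'⟩ := Finset.exists_min_image T ord hTne
    have hH1A : H1 ∈ A := (Set.Finite.mem_toFinset _).mp (Finset.mem_filter.mp hH1T).1
    have hH1le : fixedSub w ≤ H1 := (Finset.mem_filter.mp hH1T).2
    have hH1min : ∀ H ∈ A, fixedSub w ≤ H → ord H1 ≤ ord H := fun H hHA hle =>
      hH1min' H (Finset.mem_filter.mpr ⟨(Set.Finite.mem_toFinset _).mpr hHA, hle⟩)
    set w' : V ≃ₗᵢ[ℝ] V := r H1 * w with hw'
    have hw'W : w' ∈ W := W.mul_mem (hr H1 hH1A).1 hw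
    have hdesc : finrank ℝ (fixedSub w') = finrank ℝ (fixedSub w) + 1 :=
      rH_descent hr hH1A hH1le
    obtain ⟨S', l', hS'nbc, hl'F, hl'nd, hl'p, hl'prod, hS'inf, hS'card⟩ :=
      ih w' hw'W (by omega)
    have hiii : H1 ⊓ fixedSub w' = fixedSub w := inf_fixedSub_mul hr hH1A hH1le
    have hii : fixedSub w ≤ fixedSub w' := le_fixedSub_mul hr hH1A hH1le
    have hS'A : ↑S' ⊆ A := hS'nbc.1
    have hS'le : ∀ H ∈ S', fixedSub w' ≤ H := by
      intro H hH
      rw [← hS'inf]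
      exact finrank_inf_le_of_mem hH
    have hH1S' : H1 ∉ S' := by
      intro h
      have h1 : fixedSub w' ≤ H1 := hS'le H1 h
      have h2 : H1 ⊓ fixedSub w' = fixedSub w' := inf_eq_right.mpr h1
      rw [hiii] at h2
      have := congrArg (fun K : Submodule ℝ V => finrank ℝ K) h2
      omega
    have hordlt : ∀ H ∈ S', ord H1 < ord H := by
      intro H hH
      have hXH : fixedSub w ≤ H := le_trans hii (hS'le H hH)
      have h1 := hH1min H (hS'A hH) hXH
      rcases lt_or_eq_of_le h1 with h | h
      · exact h
      · exfalso
        exact hH1S' ((hord hH1A (hS'A hH) h) ▸ hH)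
    set S : Finset (Submodule ℝ V) := insert H1 S' with hS
    have hSinf : S.inf id = fixedSub w := by
      rw [hS, Finset.inf_insert, hS'inf]
      exact hiii
    have hScard : S.card = n + 1 := by
      rw [hS, Finset.card_insert_of_notMem hH1S', hS'card]
    have hSA : ↑S ⊆ A := by
      intro a ha
      rcases Finset.mem_insert.mp ha with rfl | h
      · exact hH1A
      · exact hS'A h
    have hSind : ArrIndepV S := by
      show arrRankV S = S.card
      rw [arrRankV, hSinf, hScard]
      omega
    have hSnbc : IsNBCV A ord S := by
      refine ⟨hSA, hSind, ?_⟩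
      intro B hBS hbroken
      obtain ⟨Hs, hHsA, hHsB, hcirc, hords⟩ := hbroken
      by_cases hH1B : H1 ∈ B
      · -- leads to a hyperplane above fixedSub w smaller than H1
        have hBind : ArrIndepV B :=
          indep_subset (fun K hK => A_hyper hA (hSA hK)) hBS hSind
        have hBle : B.inf id ≤ Hs := dep_insert_inf_le
          (fun K hK => A_hyper hA (hSA (hBS hK))) (A_hyper hA hHsA) hHsB hBind hcirc.1
        have hSB : S.inf id ≤ B.inf id := Finset.inf_mono hBS
        have hXHs : fixedSub w ≤ Hs := by rw [← hSinf]; exact le_trans hSB hBle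
        have h1 := hH1min Hs hHsA hXHs
        have h2 := hords H1 hH1B
        omega
      · -- B is inside S', contradicting that S' is nbc
        have hBS' : B ⊆ S' := by
          intro a ha
          rcases Finset.mem_insert.mp (hBS ha) with rfl | h
          · exact absurd ha hH1B
          · exact h
        exact hS'nbc.2.2 B hBS' ⟨Hs, hHsA, hHsB, hcirc, hords⟩
    refine ⟨S, H1 :: l', hSnbc, ?_, ?_, ?_, ?_, hSinf, hScard⟩
    · rw [List.toFinset_cons, hl'F]
    · rw [List.nodup_cons]
      exact ⟨fun h => hH1S' (hl'F ▸ List.mem_toFinset.mpr h), hl'nd⟩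
    · rw [List.pairwise_cons]
      exact ⟨fun H' hH' => hordlt H' (hl'F ▸ List.mem_toFinset.mpr hH'), hl'p⟩
    · rw [List.map_cons, List.prod_cons, hl'prod, hw', ← mul_assoc, (hr H1 hH1A).2.1.2.1,
        one_mul]

end Main3

section Main4

variable {W : Subgroup (V ≃ₗᵢ[ℝ] V)}
variable {A : Set (Submodule ℝ V)} {r : Submodule ℝ V → (V ≃ₗᵢ[ℝ] V)}
variable {ord : Submodule ℝ V → ℕ}

lemma INJ (hA : A = {H | ∃ g ∈ W, IsReflection g ∧ fixedSub g = H})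
    (hr : ∀ H ∈ A, r H ∈ W ∧ IsReflection (r H) ∧ fixedSub (r H) = H)
    (hord : Set.InjOn ord A) :
    ∀ n : ℕ, ∀ S T : Finset (Submodule ℝ V), ∀ lS lT : List (Submodule ℝ V),
    S.card = n → IsNBCV A ord S → IsNBCV A ord T →
    lS.toFinset = S → lS.Nodup → lS.Pairwise (fun H H' => ord H < ord H') →
    lT.toFinset = T → lT.Nodup → lT.Pairwise (fun H H' => ord H < ord H') →
    (lS.map r).prod = (lT.map r).prod → S = T := by
  intro n
  induction n with
  | zero =>
    intro S T lS lT hcard hSnbc hTnbc hlSF hlSnd hlSp hlTF hlTnd hlTp hprod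
    have hSe : S = ∅ := Finset.card_eq_zero.mp hcard
    subst hSe
    have hlSe : lS = [] := by
      rcases lS with _ | ⟨H, t⟩
      · rfl
      · exfalso
        have : H ∈ (H :: t).toFinset := List.mem_toFinset.mpr List.mem_cons_self
        rw [hlSF] at this
        exact Finset.notMem_empty H this
    subst hlSe
    have hT1 : (lT.map r).prod = 1 := by rw [← hprod]; rfl
    have hfix : fixedSub ((lT.map r).prod) = T.inf id := by
      rw [← hlTF]
      exact fixedSub_prod hA hr lT (fun H hH => hTnbc.1 (hlTF ▸ List.mem_toFinset.mpr hH))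
        hlTnd (hlTF ▸ hTnbc.2.1)
    rw [hT1, fixedSub_one] at hfix
    have hTind : arrRankV T = T.card := hTnbc.2.1
    rw [arrRankV, ← hfix] at hTind
    have h2 : finrank ℝ (⊤ : Submodule ℝ V) = finrank ℝ V := finrank_top ℝ V
    symm
    apply Finset.card_eq_zero.mp
    omega
  | succ n ih =>
    intro S T lS lT hcard hSnbc hTnbc hlSF hlSnd hlSp hlTF hlTnd hlTp hprod
    -- identify fixed spaces
    have hfixS : fixedSub ((lS.map r).prod) = S.inf id := by
      rw [← hlSF]
      exact fixedSub_prod hA hr lS (fun H hH => hSnbc.1 (hlSF ▸ List.mem_toFinset.mpr hH))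
        hlSnd (hlSF ▸ hSnbc.2.1)
    have hfixT : fixedSub ((lT.map r).prod) = T.inf id := by
      rw [← hlTF]
      exact fixedSub_prod hA hr lT (fun H hH => hTnbc.1 (hlTF ▸ List.mem_toFinset.mpr hH))
        hlTnd (hlTF ▸ hTnbc.2.1)
    have hinfeq : S.inf id = T.inf id := by rw [← hfixS, ← hfixT, hprod]
    -- S is nonempty
    rcases lS with _ | ⟨HS, tS⟩
    · exfalso
      have : S = ∅ := by rw [← hlSF]; rfl
      rw [this] at hcard
      simp at hcard
    -- T is nonempty too
    rcases lT with _ | ⟨HT, tT⟩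
    · exfalso
      have hTe : T = ∅ := by rw [← hlTF]; rfl
      have h1 : ((HS :: tS).map r).prod = 1 := by
        rw [hprod]; rfl
      have h2 : S.inf id = ⊤ := by
        rw [← hfixS, h1, fixedSub_one]
      have hSind : arrRankV S = S.card := hSnbc.2.1
      rw [arrRankV, h2] at hSind
      have h3 : finrank ℝ (⊤ : Submodule ℝ V) = finrank ℝ V := finrank_top ℝ V
      omega
    -- heads agree
    have hHSS : HS ∈ S := by
      rw [← hlSF]; exact List.mem_toFinset.mpr List.mem_cons_self
    have hHTT : HT ∈ T := by
      rw [← hlTF]; exact List.mem_toFinset.mpr List.mem_cons_self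
    have hminS : ∀ H ∈ S, ord HS ≤ ord H := by
      intro H hH
      exact sorted_head_min hlSp H (by rw [hlSF]; exact hH)
    have hminT : ∀ H ∈ T, ord HT ≤ ord H := by
      intro H hH
      exact sorted_head_min hlTp H (by rw [hlTF]; exact hH)
    have h1 : ord HS ≤ ord HT := nbc_min hA hSnbc hHSS hminS (hTnbc.1 hHTT)
      (by rw [hinfeq]; exact finrank_inf_le_of_mem hHTT)
    have h2 : ord HT ≤ ord HS := nbc_min hA hTnbc hHTT hminT (hSnbc.1 hHSS)
      (by rw [← hinfeq]; exact finrank_inf_le_of_mem hHSS)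
    have hHeq : HS = HT := hord (hSnbc.1 hHSS) (hTnbc.1 hHTT) (le_antisymm h1 h2)
    -- peel off the head
    have hHStS : HS ∉ tS.toFinset := by
      rw [List.mem_toFinset]
      exact (List.nodup_cons.mp hlSnd).1
    have hHTtT : HT ∉ tT.toFinset := by
      rw [List.mem_toFinset]
      exact (List.nodup_cons.mp hlTnd).1
    have htSF : tS.toFinset = S.erase HS := by
      rw [← hlSF, List.toFinset_cons, Finset.erase_insert hHStS]
    have htTF : tT.toFinset = T.erase HT := by
      rw [← hlTF, List.toFinset_cons, Finset.erase_insert hHTtT]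
    have htSnbc : IsNBCV A ord (S.erase HS) := nbc_subset hA (Finset.erase_subset _ _) hSnbc
    have htTnbc : IsNBCV A ord (T.erase HT) := nbc_subset hA (Finset.erase_subset _ _) hTnbc
    have hprodt : (tS.map r).prod = (tT.map r).prod := by
      have e1 : ((HS :: tS).map r).prod = r HS * (tS.map r).prod := by
        rw [List.map_cons, List.prod_cons]
      have e2 : ((HT :: tT).map r).prod = r HT * (tT.map r).prod := by
        rw [List.map_cons, List.prod_cons]
      have e3 : r HS * (tS.map r).prod = r HS * (tT.map r).prod := by
        rw [← e1, hprod, e2, hHeq]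
      exact mul_left_cancel e3
    have hcardt : (S.erase HS).card = n := by
      rw [Finset.card_erase_of_mem hHSS]; omega
    have hteq := ih (S.erase HS) (T.erase HT) tS tT hcardt htSnbc htTnbc htSF
      (List.nodup_cons.mp hlSnd).2 (List.pairwise_cons.mp hlSp).2 htTF
      (List.nodup_cons.mp hlTnd).2 (List.pairwise_cons.mp hlTp).2 hprodt
    have : insert HS (S.erase HS) = insert HT (T.erase HT) := by rw [hteq, hHeq]
    rw [Finset.insert_erase hHSS, Finset.insert_erase hHTT] at this
    exact this

end Main4

lemma prod_r_mem {W : Subgroup (V ≃ₗᵢ[ℝ] V)} {A : Set (Submodule ℝ V)}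
    {r : Submodule ℝ V → (V ≃ₗᵢ[ℝ] V)}
    (hr : ∀ H ∈ A, r H ∈ W ∧ IsReflection (r H) ∧ fixedSub (r H) = H)
    {l : List (Submodule ℝ V)} (hl : ∀ H ∈ l, H ∈ A) : (l.map r).prod ∈ W := by
  apply Subgroup.list_prod_mem
  intro g hg
  rw [List.mem_map] at hg
  obtain ⟨H, hH, rfl⟩ := hg
  exact (hr H (hl H hH)).1

/-- Barcelo–Goupil: for a finite real reflection group W with
reflection arrangement A(W) and a fixed linear order, the map sending an
increasing nbc-tuple (H_{r_1}, ..., H_{r_k}) to the product r_1 ⋯ r_k is a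
bijection onto W. -/
theorem stmt13
    (W : Subgroup (V ≃ₗᵢ[ℝ] V)) [Finite W]
    (hgen : Subgroup.closure {g : V ≃ₗᵢ[ℝ] V | g ∈ W ∧ IsReflection g} = W)
    (A : Set (Submodule ℝ V))
    (hA : A = {H | ∃ g ∈ W, IsReflection g ∧ fixedSub g = H})
    (r : Submodule ℝ V → (V ≃ₗᵢ[ℝ] V))
    (hr : ∀ H ∈ A, r H ∈ W ∧ IsReflection (r H) ∧ fixedSub (r H) = H)
    (ord : Submodule ℝ V → ℕ) (hord : Set.InjOn ord A) :
    ∃ e : {S : Finset (Submodule ℝ V) // IsNBCV A ord S} ≃ W,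
      ∀ (S : {S : Finset (Submodule ℝ V) // IsNBCV A ord S}) (l : List (Submodule ℝ V)),
        l.toFinset = S.1 → l.Nodup → l.Pairwise (fun H H' => ord H < ord H') →
        (e S : V ≃ₗᵢ[ℝ] V) = (l.map r).prod := by
  classical
  have hsorted : ∀ S : {S : Finset (Submodule ℝ V) // IsNBCV A ord S},
      ∃ l : List (Submodule ℝ V), l.toFinset = S.1 ∧ l.Nodup ∧
        l.Pairwise (fun H H' => ord H < ord H') :=
    fun S => exists_sorted hord S.1.card S.1 rfl S.2.1
  choose L hLF hLnd hLp using hsorted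
  have hmem : ∀ S : {S : Finset (Submodule ℝ V) // IsNBCV A ord S},
      ((L S).map r).prod ∈ W := by
    intro S
    apply prod_r_mem hr
    intro H hH
    exact S.2.1 (by rw [← hLF S]; exact List.mem_toFinset.mpr hH)
  set f : {S : Finset (Submodule ℝ V) // IsNBCV A ord S} → W :=
    fun S => ⟨((L S).map r).prod, hmem S⟩ with hf
  have hinj : Function.Injective f := by
    intro S1 S2 h
    have hprods : ((L S1).map r).prod = ((L S2).map r).prod := by
      have := congrArg (fun u : W => (u : V ≃ₗᵢ[ℝ] V)) h
      exact this
    exact Subtype.ext (INJ hA hr hord S1.1.card S1.1 S2.1 (L S1) (L S2) rfl S1.2 S2.2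
      (hLF S1) (hLnd S1) (hLp S1) (hLF S2) (hLnd S2) (hLp S2) hprods)
  have hsurj : Function.Surjective f := by
    intro w
    have hrank : finrank ℝ V = finrank ℝ (fixedSub (w : V ≃ₗᵢ[ℝ] V)) +
        (finrank ℝ V - finrank ℝ (fixedSub (w : V ≃ₗᵢ[ℝ] V))) := by
      have := Submodule.finrank_le (fixedSub (w : V ≃ₗᵢ[ℝ] V))
      omega
    obtain ⟨S, l, hSnbc, hlF, hlnd, hlp, hlprod, _, _⟩ :=
      EX hgen hA hr hord (finrank ℝ V - finrank ℝ (fixedSub (w : V ≃ₗᵢ[ℝ] V)))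
        (w : V ≃ₗᵢ[ℝ] V) w.2 hrank
    refine ⟨⟨S, hSnbc⟩, ?_⟩
    have hluniq : L ⟨S, hSnbc⟩ = l :=
      sorted_unique (hLnd _) hlnd (by rw [hLF ⟨S, hSnbc⟩, hlF]) (hLp _) hlp
    apply Subtype.ext
    show ((L ⟨S, hSnbc⟩).map r).prod = (w : V ≃ₗᵢ[ℝ] V)
    rw [hluniq, hlprod]
  refine ⟨Equiv.ofBijective f ⟨hinj, hsurj⟩, ?_⟩
  intro S l hF hnd hp
  have hluniq : l = L S := sorted_unique hnd (hLnd S) (by rw [hF, hLF S]) hp (hLp S)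
  show ((f S : W) : V ≃ₗᵢ[ℝ] V) = (l.map r).prod
  rw [hluniq]
end

section
/- Every supersolvable central arrangement A = A_d ⊃ ... ⊃ A_1 is nice: the partition π with blocks π_1 = A_1 and π_i = A_i \ A_{i-1} for i = 2, ..., d is an independent partition such that for every X ∈ L(A) with A_X ≠ ∅, the induced partition π_X contains a block that is a singleton. -/
open Module Classical

abbrev Hyp (d : ℕ) := Submodule ℝ (Fin d → ℝ)

noncomputable instance (d : ℕ) : DecidableEq (Hyp d) := Classical.decEq _

def IsLinHyp (d : ℕ) (H : Hyp d) : Prop := finrank ℝ H = d - 1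

noncomputable def arrRank (d : ℕ) (S : Finset (Hyp d)) : ℕ :=
  d - finrank ℝ (S.inf id : Hyp d)

def ArrIndep (d : ℕ) (S : Finset (Hyp d)) : Prop := arrRank d S = S.card

def IsCircuit (d : ℕ) (S : Finset (Hyp d)) : Prop :=
  ¬ ArrIndep d S ∧ ∀ H ∈ S, ArrIndep d (S.erase H)

def IsBrokenCircuit (d : ℕ) (A : Finset (Hyp d)) (ord : Hyp d → ℕ)
    (B : Finset (Hyp d)) : Prop :=
  ∃ H ∈ A, H ∉ B ∧ IsCircuit d (insert H B) ∧ ∀ H' ∈ B, ord H < ord H'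

def IsNBC (d : ℕ) (A : Finset (Hyp d)) (ord : Hyp d → ℕ) (S : Finset (Hyp d)) : Prop :=
  S ⊆ A ∧ ArrIndep d S ∧ ∀ B ⊆ S, ¬ IsBrokenCircuit d A ord B

def arrComplement (d : ℕ) (A : Finset (Hyp d)) : Set (Fin d → ℝ) :=
  {x | ∀ H ∈ A, x ∉ (H : Set (Fin d → ℝ))}

noncomputable def numChambers (d : ℕ) (A : Finset (Hyp d)) : ℕ :=
  Nat.card (ConnectedComponents (arrComplement d A))

structure SSFiltration (d : ℕ) (A : Finset (Hyp d)) (𝒜 : ℕ → Finset (Hyp d)) : Prop where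
  zero : 𝒜 0 = ∅
  top : 𝒜 d = A
  mono : ∀ i < d, 𝒜 i ⊆ 𝒜 (i + 1)
  hyp : ∀ H ∈ A, IsLinHyp d H
  rank : ∀ i, 1 ≤ i → i ≤ d → arrRank d (𝒜 i) = i
  ss : ∀ i, 2 ≤ i → i ≤ d → ∀ H ∈ 𝒜 i, ∀ H' ∈ 𝒜 i, H ≠ H' →
    ∃ H'' ∈ 𝒜 (i - 1), H ⊓ H' ≤ H''

def CompatOrder (d : ℕ) (𝒜 : ℕ → Finset (Hyp d)) (ord : Hyp d → ℕ) : Prop :=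
  ∀ i j : ℕ, ∀ H ∈ 𝒜 i \ 𝒜 (i - 1), ∀ H' ∈ 𝒜 j \ 𝒜 (j - 1), i < j → ord H < ord H'

-- complexification
noncomputable def complexify (d : ℕ) (H : Hyp d) : Submodule ℂ (Fin d → ℂ) :=
  Submodule.span ℂ ((fun x : Fin d → ℝ => (fun i => (x i : ℂ))) '' (H : Set (Fin d → ℝ)))

def cxComplement (d : ℕ) (A : Finset (Hyp d)) : Set (Fin d → ℂ) :=
  {z | ∀ H ∈ A, z ∉ (complexify d H : Set (Fin d → ℂ))}

section Aux

variable {d : ℕ} {A : Finset (Hyp d)} {𝒜 : ℕ → Finset (Hyp d)}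

lemma total_rank : finrank ℝ (Fin d → ℝ) = d := Module.finrank_fin_fun ℝ

lemma finrank_le_d (U : Hyp d) : finrank ℝ U ≤ d := by
  simpa [total_rank] using Submodule.finrank_le U

lemma chain (hss : SSFiltration d A 𝒜) {i j : ℕ} (hij : i ≤ j) (hjd : j ≤ d) :
    𝒜 i ⊆ 𝒜 j := by
  induction j with
  | zero => obtain rfl : i = 0 := Nat.le_zero.mp hij; exact subset_rfl
  | succ n ih =>
    rcases Nat.lt_or_ge i (n + 1) with h | h
    · exact (ih (by omega) (by omega)).trans (hss.mono n (by omega))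
    · obtain rfl : i = n + 1 := le_antisymm hij h
      exact subset_rfl

lemma mem_A (hss : SSFiltration d A 𝒜) {i : ℕ} (hid : i ≤ d) {H : Hyp d}
    (h : H ∈ 𝒜 i) : H ∈ A :=
  hss.top ▸ chain hss hid le_rfl h

lemma hyp_rank (hss : SSFiltration d A 𝒜) {H : Hyp d} (h : H ∈ A) :
    finrank ℝ H = d - 1 := hss.hyp H h

lemma X_rank (hss : SSFiltration d A 𝒜) {m : ℕ} (h1 : 1 ≤ m) (hmd : m ≤ d) :
    finrank ℝ ((𝒜 m).inf id : Hyp d) = d - m := by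
  have h := hss.rank m h1 hmd
  unfold arrRank at h
  have := finrank_le_d ((𝒜 m).inf id)
  omega

lemma sup_hyp_top {H U : Hyp d} (hH : finrank ℝ H = d - 1) (hd : 1 ≤ d)
    (h : ¬ U ≤ H) : U ⊔ H = ⊤ := by
  have h1 : H < U ⊔ H := lt_of_le_of_ne le_sup_right (fun e => h (e ▸ le_sup_left))
  have h2 : finrank ℝ ((U ⊔ H : Hyp d)) ≤ d := finrank_le_d _
  have h3 := Submodule.finrank_lt_finrank_of_lt h1
  apply Submodule.eq_top_of_finrank_eq
  rw [total_rank]; omega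

lemma inf_hyp_rank {H U : Hyp d} (hH : finrank ℝ H = d - 1) (hd : 1 ≤ d)
    (h : ¬ U ≤ H) : finrank ℝ ((U ⊓ H : Hyp d)) + 1 = finrank ℝ U := by
  have heq := Submodule.finrank_sup_add_finrank_inf_eq U H
  rw [sup_hyp_top hH hd h, finrank_top, total_rank, hH] at heq
  have := finrank_le_d U
  omega

/-- Crux lemma: a hyperplane of level `m+1` cannot contain `X_m = inf 𝒜_m`. -/
lemma crux (hss : SSFiltration d A 𝒜) {m : ℕ} (hmd : m + 1 ≤ d) {H : Hyp d}
    (hH : H ∈ 𝒜 (m + 1)) (hHn : H ∉ 𝒜 m) : ¬ ((𝒜 m).inf id ≤ H) := by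
  intro hle
  have hd1 : 1 ≤ d := by omega
  have hHA : H ∈ A := mem_A hss hmd hH
  have hHr : finrank ℝ H = d - 1 := hyp_rank hss hHA
  rcases Nat.eq_zero_or_pos m with rfl | hm
  · rw [hss.zero, Finset.inf_empty] at hle
    have hTop : H = ⊤ := top_le_iff.mp hle
    have : finrank ℝ H = d := by rw [hTop, finrank_top, total_rank]
    omega
  -- m ≥ 1
  have hXr : finrank ℝ ((𝒜 m).inf id : Hyp d) = d - m := X_rank hss hm (by omega)
  have hX1r : finrank ℝ ((𝒜 (m + 1)).inf id : Hyp d) = d - (m + 1) :=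
    X_rank hss (by omega) hmd
  have hK : ∃ K ∈ 𝒜 (m + 1), ¬ ((𝒜 m).inf id ≤ K) := by
    by_contra hcon
    push_neg at hcon
    have h1 : (𝒜 m).inf id ≤ (𝒜 (m + 1)).inf id := Finset.le_inf hcon
    have := Submodule.finrank_mono h1
    omega
  obtain ⟨K, hK1, hK2⟩ := hK
  have hKA : K ∈ A := mem_A hss hmd hK1
  have hKr : finrank ℝ K = d - 1 := hyp_rank hss hKA
  have hne : H ≠ K := fun e => hK2 (e ▸ hle)
  obtain ⟨s, hs, hHKs⟩ := hss.ss (m + 1) (by omega) hmd H hH K hK1 hne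
  have hs' : s ∈ 𝒜 m := hs
  have hsA : s ∈ A := mem_A hss (by omega) hs'
  have hsr : finrank ℝ s = d - 1 := hyp_rank hss hsA
  have hXs : (𝒜 m).inf id ≤ s := Finset.inf_le hs'
  have hHK : ¬ H ≤ K := fun h =>
    hne (Submodule.eq_of_le_of_finrank_le h (by rw [hKr, hHr]))
  have h4 : finrank ℝ (((𝒜 m).inf id ⊓ K : Hyp d)) + 1 = d - m := by
    rw [inf_hyp_rank hKr hd1 hK2, hXr]
  have hZr : finrank ℝ ((H ⊓ K : Hyp d)) + 1 = d - 1 := by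
    rw [inf_hyp_rank hKr hd1 hHK, hHr]
  have hXZ : ((𝒜 m).inf id ⊓ (H ⊓ K) : Hyp d) = (𝒜 m).inf id ⊓ K := by
    apply le_antisymm
    · exact le_inf inf_le_left (le_trans inf_le_right inf_le_right)
    · exact le_inf inf_le_left (le_inf (le_trans inf_le_left hle) inf_le_right)
  have hsup := Submodule.finrank_sup_add_finrank_inf_eq ((𝒜 m).inf id) (H ⊓ K)
  rw [hXZ] at hsup
  have hYd : finrank ℝ (((𝒜 m).inf id ⊔ (H ⊓ K) : Hyp d)) = d - 1 := by omega
  have hYH : (𝒜 m).inf id ⊔ (H ⊓ K) ≤ H := sup_le hle inf_le_left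
  have hYs : (𝒜 m).inf id ⊔ (H ⊓ K) ≤ s := sup_le hXs hHKs
  have e1 : ((𝒜 m).inf id ⊔ (H ⊓ K) : Hyp d) = H :=
    Submodule.eq_of_le_of_finrank_le hYH (by rw [hYd, hHr])
  have e2 : ((𝒜 m).inf id ⊔ (H ⊓ K) : Hyp d) = s :=
    Submodule.eq_of_le_of_finrank_le hYs (by rw [hYd, hsr])
  exact hHn (by rw [← e1, e2]; exact hs')

/-- Closure: any hyperplane of `A` containing `X_m` belongs to `𝒜 m`. -/
lemma closedLemma (hss : SSFiltration d A 𝒜) {m : ℕ} (hmd : m ≤ d) {H : Hyp d}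
    (hHA : H ∈ A) (hle : (𝒜 m).inf id ≤ H) : H ∈ 𝒜 m := by
  classical
  by_contra hn
  have hPd : ∃ j, H ∈ 𝒜 j := ⟨d, hss.top ▸ hHA⟩
  have hjP : H ∈ 𝒜 (Nat.find hPd) := Nat.find_spec hPd
  have hjd : Nat.find hPd ≤ d := Nat.find_min' hPd (hss.top ▸ hHA)
  have hj1 : m < Nat.find hPd := by
    by_contra h
    push_neg at h
    exact hn (chain hss h hmd hjP)
  have hprev : H ∉ 𝒜 (Nat.find hPd - 1) := Nat.find_min hPd (by omega)
  have hj : Nat.find hPd - 1 + 1 = Nat.find hPd := by omega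
  have hcl := crux hss (m := Nat.find hPd - 1) (by omega) (by rw [hj]; exact hjP) hprev
  apply hcl
  exact le_trans (Finset.inf_mono (chain hss (by omega) (by omega))) hle

end Aux

/-- every supersolvable arrangement is nice, via the partition
π_i = A_i \ A_{i-1}: this partition is independent, and every nonempty
localization A_X induces a partition containing a singleton block. -/
theorem stmt17 (d : ℕ) (A : Finset (Hyp d)) (𝒜 : ℕ → Finset (Hyp d))
    (hss : SSFiltration d A 𝒜) :
    (∀ c : ℕ → Hyp d, (∀ i, 1 ≤ i → i ≤ d → c i ∈ 𝒜 i ∧ c i ∉ 𝒜 (i - 1)) →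
      arrRank d (Finset.image c (Finset.Icc 1 d)) = d) ∧
    (∀ X : Hyp d, (∃ S ⊆ A, X = S.inf id) →
      (A.filter (fun H => X ≤ H)).Nonempty →
      ∃ i, 1 ≤ i ∧ i ≤ d ∧
        (((𝒜 i \ 𝒜 (i - 1)).filter (fun H => X ≤ H)).card = 1)) := by
  classical
  constructor
  · -- Part 1: independence
    intro c hc
    have key : ∀ k, k ≤ d →
        finrank ℝ ((Finset.image c (Finset.Icc 1 k)).inf id : Hyp d) = d - k := by
      intro k
      induction k with
      | zero =>
        intro _
        rw [show Finset.Icc 1 0 = (∅ : Finset ℕ) by rfl]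
        simp [finrank_top, total_rank]
        exact (finrank_top ℝ (Fin d → ℝ)).trans total_rank
      | succ n ih =>
        intro hkd
        have hIcc : Finset.Icc 1 (n + 1) = insert (n + 1) (Finset.Icc 1 n) := by
          ext x; simp only [Finset.mem_Icc, Finset.mem_insert]; omega
        rw [hIcc, Finset.image_insert, Finset.inf_insert]
        have hc' := hc (n + 1) (by omega) hkd
        have hV : finrank ℝ ((Finset.image c (Finset.Icc 1 n)).inf id : Hyp d) = d - n :=
          ih (by omega)
        have hXV : (𝒜 n).inf id ≤ (Finset.image c (Finset.Icc 1 n)).inf id := by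
          apply Finset.le_inf
          intro b hb
          obtain ⟨i, hi, rfl⟩ := Finset.mem_image.mp hb
          rw [Finset.mem_Icc] at hi
          have hci := (hc i hi.1 (by omega)).1
          exact Finset.inf_le (chain hss (i := i) (j := n) hi.2 (by omega) hci)
        have hcA : c (n + 1) ∈ A := mem_A hss hkd hc'.1
        have hcr : finrank ℝ (c (n + 1)) = d - 1 := hyp_rank hss hcA
        have hnot : ¬ (Finset.image c (Finset.Icc 1 n)).inf id ≤ c (n + 1) := by
          intro h
          exact hc'.2 (closedLemma hss (by omega) hcA (le_trans hXV h))
        have hstep := inf_hyp_rank hcr (by omega) hnot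
        rw [hV] at hstep
        rw [show (id (c (n + 1)) ⊓ (Finset.image c (Finset.Icc 1 n)).inf id : Hyp d)
            = (Finset.image c (Finset.Icc 1 n)).inf id ⊓ c (n + 1) from inf_comm _ _]
        omega
    unfold arrRank
    rw [key d le_rfl]
    omega
  · -- Part 2: singleton block in localization
    intro X _ hne
    obtain ⟨H0, hH0⟩ := hne
    rw [Finset.mem_filter] at hH0
    have hex : ∃ j, ∃ H ∈ 𝒜 j, X ≤ H := ⟨d, H0, hss.top ▸ hH0.1, hH0.2⟩
    obtain ⟨H1, hH1, hXH1⟩ := Nat.find_spec hex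
    have hid : Nat.find hex ≤ d := Nat.find_min' hex ⟨H0, hss.top ▸ hH0.1, hH0.2⟩
    have hi1 : 1 ≤ Nat.find hex := by
      rcases Nat.eq_zero_or_pos (Nat.find hex) with h | h
      · rw [h, hss.zero] at hH1; exact absurd hH1 (Finset.notMem_empty _)
      · exact h
    refine ⟨Nat.find hex, hi1, hid, ?_⟩
    rw [Finset.card_eq_one]
    refine ⟨H1, Finset.eq_singleton_iff_unique_mem.mpr ⟨?_, ?_⟩⟩
    · rw [Finset.mem_filter, Finset.mem_sdiff]
      exact ⟨⟨hH1, fun h => Nat.find_min hex (by omega) ⟨H1, h, hXH1⟩⟩, hXH1⟩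
    · intro H' hH'
      rw [Finset.mem_filter, Finset.mem_sdiff] at hH'
      obtain ⟨⟨hH'i, _⟩, hXH'⟩ := hH'
      by_contra hne'
      rcases Nat.lt_or_ge (Nat.find hex) 2 with h2 | h2
      · -- Nat.find hex = 1
        have hfe : Nat.find hex = 1 := by omega
        rw [hfe] at hH1 hH'i
        have hd1 : 1 ≤ d := by omega
        have hX1 : finrank ℝ ((𝒜 1).inf id : Hyp d) = d - 1 := X_rank hss le_rfl hd1
        have e1 : (𝒜 1).inf id = H1 :=
          Submodule.eq_of_le_of_finrank_le (Finset.inf_le hH1)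
            (by rw [hX1, hyp_rank hss (mem_A hss hd1 hH1)])
        have e2 : (𝒜 1).inf id = H' :=
          Submodule.eq_of_le_of_finrank_le (Finset.inf_le hH'i)
            (by rw [hX1, hyp_rank hss (mem_A hss hd1 hH'i)])
        exact hne' (e2.symm.trans e1)
      · obtain ⟨s, hs, hle⟩ := hss.ss (Nat.find hex) h2 hid H' hH'i H1 hH1 hne'
        exact Nat.find_min hex (m := Nat.find hex - 1) (by omega)
          ⟨s, hs, le_trans (le_inf hXH' hXH1) hle⟩
end
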